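/- arXiv:2305.06072 — 15 statements merged into one kernel-verified Lean document; each statement's English description precedes it below -/
import Mathlib

section
/- Let R be a commutative ring, a : ℕ → R, and S = ∑_{i≥0} a_i X^i ∈ R⟦X⟧. For all k, n ∈ ℕ, the coefficient of X^n in S^k equals ∑ C(k,l) · (l!/(k_1!⋯k_n!)) · a_0^{k-l} · a_1^{k_1} a_2^{k_2} ⋯ a_n^{k_n}, where the sum ranges over all n-tuples (k_1,…,k_n) of nonnegative integers with k_1 + 2k_2 + ⋯ + n·k_n = n and l = k_1 + k_2 + ⋯ + k_n (terms with l > k vanish since C(k,l) = 0). -/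
open Finset PowerSeries

/-- The finset of `n`-tuples `(k₁, …, kₙ)` of nonnegative integers with
`k₁ + 2k₂ + ⋯ + n·kₙ = n` (each `kᵢ` is then at most `n`). -/
noncomputable def thTuples (n : ℕ) : Finset (Fin n → ℕ) :=
  (Fintype.piFinset fun _ => Finset.range (n + 1)).filter
    fun f => ∑ i, (i.1 + 1) * f i = n

theorem coeff_pow_eq_sum_multinomial {R : Type*} [CommRing R] (a : ℕ → R) (k n : ℕ) :
    PowerSeries.coeff n ((PowerSeries.mk a) ^ k) =
      ∑ f ∈ thTuples n,
        (k.choose (∑ i, f i) * Nat.multinomial Finset.univ f) •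
          (a 0 ^ (k - ∑ i, f i) * ∏ i, a (i.1 + 1) ^ f i) := by
  classical
  set T : R⟦X⟧ := ∑ i ∈ range (n+1), PowerSeries.C (a i) * X ^ i with hT
  have hcoeffT : ∀ m, m ≤ n → coeff m T = a m := by
    intro m hm
    rw [hT, map_sum]
    simp [coeff_X_pow, Finset.sum_ite_eq' (range (n+1)) m, Nat.lt_succ_of_le hm]
  have h1 : coeff n ((mk a) ^ k) = coeff n (T ^ k) := by
    have hdvd : (X : R⟦X⟧) ^ (n+1) ∣ (mk a) ^ k - T ^ k := by
      refine dvd_trans ?_ (sub_dvd_pow_sub_pow _ _ k)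
      rw [X_pow_dvd_iff]
      intro m hm
      rw [map_sub, coeff_mk, hcoeffT m (by omega), sub_self]
    have := X_pow_dvd_iff.mp hdvd n (by omega)
    rw [map_sub, sub_eq_zero] at this
    exact this
  have h2 : coeff n (T ^ k) =
      ∑ g ∈ (piAntidiag (range (n+1)) k).filter
          (fun g => ∑ i ∈ range (n+1), i * g i = n),
        Nat.multinomial (range (n+1)) g • ∏ i ∈ range (n+1), a i ^ g i := by
    rw [hT, Finset.sum_pow_eq_sum_piAntidiag, map_sum, Finset.sum_filter]
    refine Finset.sum_congr rfl fun g hg => ?_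
    have hprod : ∏ i ∈ range (n+1), (PowerSeries.C (a i) * X ^ i) ^ g i
        = PowerSeries.C (∏ i ∈ range (n+1), a i ^ g i)
            * X ^ (∑ i ∈ range (n+1), i * g i) := by
      rw [map_prod, ← Finset.prod_pow_eq_pow_sum, ← Finset.prod_mul_distrib]
      refine Finset.prod_congr rfl fun i _ => ?_
      rw [mul_pow, map_pow, ← pow_mul]
    rw [hprod, ← nsmul_eq_mul, map_nsmul, coeff_C_mul, coeff_X_pow]
    by_cases hc : ∑ i ∈ range (n+1), i * g i = n
    · rw [if_pos hc, if_pos hc.symm, mul_one]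
    · rw [if_neg hc, if_neg (fun h => hc h.symm), mul_zero, smul_zero]
  rw [h1, h2]
  rw [← Finset.sum_filter_of_ne (p := fun f : Fin n → ℕ => ∑ i, f i ≤ k)
    (fun f _ hne => Nat.le_of_not_lt fun hgt => hne
      (by rw [Nat.choose_eq_zero_of_lt hgt, zero_mul, zero_smul]))]
  have hsplit : ∀ (F : ℕ → ℕ), ∑ i ∈ range (n+1), F i = F 0 + ∑ j : Fin n, F (j.1+1) := by
    intro F
    rw [Finset.sum_range_succ' F n, Fin.sum_univ_eq_sum_range (fun j => F (j+1)) n, add_comm]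
  refine Finset.sum_nbij' (fun g => fun j : Fin n => g (j.1+1))
    (fun f => fun i : ℕ => if i = 0 then k - ∑ j, f j
        else if h : i - 1 < n then f ⟨i-1, h⟩ else 0) ?_ ?_ ?_ ?_ ?_
  · -- hi
    intro g hg
    simp only [Finset.mem_filter, Finset.mem_piAntidiag] at hg
    obtain ⟨⟨hsum, _⟩, hwt⟩ := hg
    rw [hsplit (fun i => i * g i), Nat.zero_mul, zero_add] at hwt
    rw [hsplit g] at hsum
    simp only [Finset.mem_filter, thTuples, Fintype.mem_piFinset, Finset.mem_range]
    refine ⟨⟨fun j => ?_, hwt⟩, by omega⟩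
    have h1 : (j.1+1) * g (j.1+1) ≤ ∑ j : Fin n, (j.1+1) * g (j.1+1) :=
      Finset.single_le_sum (f := fun j : Fin n => (j.1+1) * g (j.1+1))
        (fun _ _ => Nat.zero_le _) (Finset.mem_univ j)
    rw [hwt] at h1
    have h2 : g (j.1+1) ≤ (j.1+1) * g (j.1+1) := Nat.le_mul_of_pos_left _ (Nat.succ_pos _)
    omega
  · -- hj
    intro f hf
    simp only [Finset.mem_filter, thTuples, Fintype.mem_piFinset, Finset.mem_range] at hf
    obtain ⟨⟨_, hwt⟩, hle⟩ := hf
    simp only [Finset.mem_filter, Finset.mem_piAntidiag, Finset.mem_range]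
    have hv : ∀ j : Fin n, (if (j.1+1) = 0 then k - ∑ j, f j
        else if h : (j.1+1) - 1 < n then f ⟨(j.1+1)-1, h⟩ else 0) = f j := by
      intro j
      rw [if_neg (Nat.succ_ne_zero _), Nat.add_sub_cancel, dif_pos j.2]
    refine ⟨⟨?_, ?_⟩, ?_⟩
    · rw [hsplit]
      simp only [hv, if_true]
      omega
    · intro i hi
      by_contra hgt
      apply hi
      rw [if_neg (by omega), dif_neg (by omega)]
    · rw [hsplit (fun i => i * _)]
      simp only [hv, Nat.zero_mul, zero_add]
      exact hwt
  · -- left inverse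
    intro g hg
    simp only [Finset.mem_filter, Finset.mem_piAntidiag] at hg
    obtain ⟨⟨hsum, hsupp⟩, _⟩ := hg
    funext i
    simp only []
    rcases Nat.eq_zero_or_pos i with rfl | hi
    · rw [if_pos rfl]
      rw [hsplit g] at hsum
      omega
    · rw [if_neg (by omega)]
      by_cases h : i - 1 < n
      · rw [dif_pos h]
        congr 1
        omega
      · rw [dif_neg h]
        by_contra hne
        have := hsupp i fun h0 => hne h0.symm
        rw [Finset.mem_range] at this
        omega
  · -- right inverse
    intro f hf
    funext j
    simp only []
    rw [if_neg (Nat.succ_ne_zero _), Nat.add_sub_cancel, dif_pos j.2]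
  · -- terms agree
    intro g hg
    simp only [Finset.mem_filter, Finset.mem_piAntidiag] at hg
    obtain ⟨⟨hsum, hsupp⟩, _⟩ := hg
    rw [hsplit g] at hsum
    have hl : ∑ j : Fin n, g (j.1+1) ≤ k := by omega
    have hg0 : g 0 = k - ∑ j : Fin n, g (j.1+1) := by omega
    have hprod : ∏ i ∈ range (n+1), a i ^ g i
        = a 0 ^ (k - ∑ j : Fin n, g (j.1+1)) * ∏ j : Fin n, a (j.1+1) ^ g (j.1+1) := by
      rw [Finset.prod_range_succ' (fun i => a i ^ g i) n,
        Fin.prod_univ_eq_prod_range (fun j => a (j+1) ^ g (j+1)) n, mul_comm, hg0]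
    have hins : range (n+1) = insert 0 ((range n).image (· + 1)) := by
      ext i
      simp only [Finset.mem_range, Finset.mem_insert, Finset.mem_image, Finset.mem_range]
      constructor
      · intro h
        rcases Nat.eq_zero_or_pos i with rfl | h1
        · exact Or.inl rfl
        · exact Or.inr ⟨i - 1, by omega, by omega⟩
      · rintro (rfl | ⟨x, hx, rfl⟩) <;> omega
    have h0ni : 0 ∉ (range n).image (· + 1) := by simp
    have hmulti : Nat.multinomial (range (n+1)) g
        = k.choose (∑ j : Fin n, g (j.1+1)) * Nat.multinomial Finset.univ
            (fun j : Fin n => g (j.1+1)) := by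
      rw [hins, Nat.multinomial_insert h0ni]
      have hsum' : ∑ i ∈ (range n).image (· + 1), g i = ∑ j : Fin n, g (j.1+1) := by
        rw [Finset.sum_image (fun x _ y _ h => by omega),
          Fin.sum_univ_eq_sum_range (fun j => g (j+1)) n]
      rw [hsum', hg0]
      congr 1
      · rw [Nat.sub_add_cancel hl, Nat.choose_symm hl]
      · rw [Nat.multinomial, Nat.multinomial, hsum',
          Finset.prod_image (fun x _ y _ h => by omega),
          ← Fin.prod_univ_eq_prod_range (fun j => Nat.factorial (g (j+1))) n]
    simp only []
    rw [hmulti, hprod]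
end

section
/- Let R be a commutative ring, a : ℕ → R with a_0 a unit of R, and S = ∑_{i≥0} a_i X^i ∈ R⟦X⟧. Define b_0 = a_0^{-1} and, for n ≥ 1, b_n = (-1)^n a_0^{-(n+1)} · det T_n, where T_n is the n×n matrix whose (i,j) entry (1-indexed) is a_{j-i+1} if i ≤ j, is a_0 if i = j+1, and is 0 if i > j+1. Then S · (∑_{n≥0} b_n X^n) = 1 in R⟦X⟧, i.e. ∑_{n≥0} b_n X^n is the multiplicative inverse of S. -/
/-!
Expanding `det T_{n+2}` with first row replaced by `(r_0, r_1, …)` along its first column gives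
`r_0 det T_{n+1} - a_0` times the same kind of determinant of size `n + 1` with first row
`(r_1, r_2, …)`. Iterating, with `r_j = a_{j+1}`, yields the recurrence
`det T_{n+1} = ∑_{k ≤ n} (-a_0)^k a_{k+1} det T_{n-k}`, and after multiplying by
`(-a_0⁻¹)^{n+1}` this is exactly the vanishing of the coefficient of `X^{n+1}` in `S · ∑ b_n X^n`.
-/

open Finset PowerSeries

namespace Matrix

variable {R : Type*} [CommRing R]

def toeplitzHessenberg (a : ℕ → R) (n : ℕ) : Matrix (Fin n) (Fin n) R :=
  of fun i j => if (i : ℕ) ≤ j then a (j - i + 1) else if (i : ℕ) = j + 1 then a 0 else 0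

variable (a : ℕ → R)

theorem toeplitzHessenberg_submatrix_succ (n : ℕ) :
    (toeplitzHessenberg a (n + 1)).submatrix Fin.succ Fin.succ = toeplitzHessenberg a n := by
  ext i j
  simp only [toeplitzHessenberg, submatrix_apply, of_apply, Fin.val_succ]
  split_ifs <;> first | rfl | (congr 1; omega)

theorem updateRow_toeplitzHessenberg_submatrix_succAbove_one (r : ℕ → R) (n : ℕ) :
    ((toeplitzHessenberg a (n + 2)).updateRow 0 (fun j => r j)).submatrix
        (Fin.succAbove 1) Fin.succ =
      (toeplitzHessenberg a (n + 1)).updateRow 0 (fun j => r (j + 1)) := by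
  ext i j
  cases i using Fin.cases with
  | zero => simp
  | succ i =>
    have : (1 : Fin (n + 2)).succAbove i.succ = i.succ.succ :=
      Fin.succAbove_of_le_castSucc _ _ (by simp [Fin.le_def])
    simp only [submatrix_apply, this, updateRow_ne (Fin.succ_ne_zero _), toeplitzHessenberg,
      of_apply, Fin.val_succ]
    split_ifs <;> first | rfl | (congr 1; omega)

theorem det_updateRow_zero_toeplitzHessenberg (r : ℕ → R) (n : ℕ) :
    ((toeplitzHessenberg a (n + 1)).updateRow 0 (fun j => r j)).det =
      ∑ k ∈ range (n + 1), (-a 0) ^ k * r k * (toeplitzHessenberg a (n - k)).det := by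
  induction n generalizing r with
  | zero => simp
  | succ n ih =>
    set M := (toeplitzHessenberg a (n + 2)).updateRow 0 (fun j => r j)
    have hM0 : M.submatrix (Fin.succAbove 0) Fin.succ = toeplitzHessenberg a (n + 1) := by
      rw [submatrix_updateRow_succAbove, Fin.succAbove_zero, toeplitzHessenberg_submatrix_succ]
    have hM1 : M.submatrix (Fin.succAbove 1) Fin.succ =
        (toeplitzHessenberg a (n + 1)).updateRow 0 (fun j => r (j + 1)) :=
      updateRow_toeplitzHessenberg_submatrix_succAbove_one a r n
    have hM00 : M 0 0 = r 0 := by simp [M]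
    have hM10 : M 1 0 = a 0 := by simp [M, toeplitzHessenberg]
    have hM_col (i : Fin n) : M i.succ.succ 0 = 0 := by simp [M, toeplitzHessenberg]
    rw [det_succ_column_zero, Fin.sum_univ_succ, Fin.sum_univ_succ, Fin.succ_zero_eq_one, hM0, hM1,
      hM00, hM10, ih (fun j => r (j + 1)),
      Fintype.sum_eq_zero _ fun i => by rw [hM_col, mul_zero, zero_mul], add_zero,
      sum_range_succ' _ (n + 1), mul_sum, add_comm]
    congr 1
    · refine sum_congr rfl fun k _ => ?_
      rw [Nat.add_sub_add_right, Fin.val_one, pow_one]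
      ring
    · simp

theorem det_toeplitzHessenberg_succ (n : ℕ) :
    (toeplitzHessenberg a (n + 1)).det =
      ∑ k ∈ range (n + 1), (-a 0) ^ k * a (k + 1) * (toeplitzHessenberg a (n - k)).det := by
  have hrow : (toeplitzHessenberg a (n + 1)).updateRow 0 (fun j => a (j + 1)) =
      toeplitzHessenberg a (n + 1) := by
    have : (fun j : Fin (n + 1) => a (j + 1)) = toeplitzHessenberg a (n + 1) 0 := by
      ext j
      simp [toeplitzHessenberg]
    rw [this, updateRow_eq_self]
  rw [← det_updateRow_zero_toeplitzHessenberg, hrow]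

end Matrix

namespace PowerSeries

variable {R : Type*} [CommRing R]

theorem mk_mul_mk_eq_one_of_recurrence {a b D : ℕ → R} {v : R} (hv : a 0 * v = 1)
    (hD0 : D 0 = 1)
    (hD : ∀ n, D (n + 1) = ∑ k ∈ range (n + 1), (-a 0) ^ k * a (k + 1) * D (n - k))
    (hb : ∀ n, b n = v * (-v) ^ n * D n) :
    mk a * mk b = 1 := by
  ext n
  rw [coeff_mul, Nat.sum_antidiagonal_eq_sum_range_succ_mk]
  simp only [coeff_mk]
  cases n with
  | zero => simp [hb, hD0, hv]
  | succ n =>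
    have hterm : ∀ k ∈ range (n + 1),
        (-v) ^ (n + 1) * ((-a 0) ^ k * a (k + 1) * D (n - k)) = -(a (k + 1) * b (n - k)) := by
      intro k hk
      obtain ⟨m, rfl⟩ := Nat.exists_eq_add_of_le (Nat.lt_succ_iff.mp (mem_range.mp hk))
      calc (-v) ^ (k + m + 1) * ((-a 0) ^ k * a (k + 1) * D (k + m - k))
          = ((-a 0) ^ k * (-v) ^ k) * ((-v) ^ (m + 1) * a (k + 1) * D m) := by
            rw [Nat.add_sub_cancel_left]; ring
        _ = -(a (k + 1) * b (k + m - k)) := by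
            rw [← mul_pow, neg_mul_neg, hv, one_pow, one_mul, Nat.add_sub_cancel_left, hb]; ring
    have hb0 : a 0 * b (n + 1) = (-v) ^ (n + 1) * D (n + 1) := by
      rw [hb, ← mul_assoc, ← mul_assoc, hv, one_mul]
    rw [sum_range_succ', coeff_one, if_neg n.succ_ne_zero, Nat.sub_zero, hb0, hD, mul_sum,
      sum_congr rfl hterm]
    simp

end PowerSeries

theorem inverse_powerSeries_det {R : Type*} [CommRing R] (a : ℕ → R) (u : Rˣ)
    (hu : (u : R) = a 0) (b : ℕ → R)
    (hb0 : b 0 = (↑u⁻¹ : R))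
    (hb : ∀ n : ℕ, 1 ≤ n → b n =
      (-1 : R) ^ n * (↑u⁻¹ : R) ^ (n + 1) *
        Matrix.det (Matrix.of fun i j : Fin n =>
          if (i : ℕ) ≤ (j : ℕ) then a ((j : ℕ) - (i : ℕ) + 1)
          else if (i : ℕ) = (j : ℕ) + 1 then a 0 else 0)) :
    PowerSeries.mk a * PowerSeries.mk b = 1 := by
  have hv : a 0 * (↑u⁻¹ : R) = 1 := by rw [← hu, Units.mul_inv]
  have hbD (n : ℕ) : b n = ↑u⁻¹ * (-↑u⁻¹) ^ n * (Matrix.toeplitzHessenberg a n).det := by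
    rcases n with _ | n
    · simp [hb0]
    · rw [hb (n + 1) n.succ_pos, Matrix.toeplitzHessenberg, neg_pow]
      ring
  exact mk_mul_mk_eq_one_of_recurrence hv (by simp) (Matrix.det_toeplitzHessenberg_succ a) hbD
end

section
/- Let R be a commutative ring, a : ℕ → R with a_0 a unit of R, and S = ∑_{i≥0} a_i X^i ∈ R⟦X⟧. Define b_0 = a_0^{-1} and, for n ≥ 1, b_n = ∑ (-1)^p · (p!/(k_1!⋯k_n!)) · a_0^{-(p+1)} · a_1^{k_1} a_2^{k_2} ⋯ a_n^{k_n}, where the sum ranges over all n-tuples (k_1,…,k_n) of nonnegative integers with k_1 + 2k_2 + ⋯ + n·k_n = n and p = k_1 + ⋯ + k_n. Then S · (∑_{n≥0} b_n X^n) = 1 in R⟦X⟧. -/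
open Finset PowerSeries

section Aux

open Nat

lemma update_comp' {N : ℕ} {M : Type*} (F : Fin N → ℕ → M) (g : Fin N → ℕ) (j : Fin N) (v : ℕ) :
    (fun i => F i (Function.update g j v i)) = Function.update (fun i => F i (g i)) j (F j v) := by
  funext i
  rcases eq_or_ne i j with rfl | h
  · simp
  · simp [Function.update_of_ne h]

lemma multinomial_deriv {N : ℕ} (f : Fin N → ℕ) (hf : 0 < ∑ i, f i) :
    ∑ j ∈ univ.filter (fun j => 1 ≤ f j),
      Nat.multinomial univ (Function.update f j (f j - 1)) = Nat.multinomial univ f := by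
  set P : ℕ := ∏ i, (f i)! with hP
  set p : ℕ := ∑ i, f i with hp
  have hPpos : 0 < P := Finset.prod_pos fun i _ => Nat.factorial_pos _
  refine Nat.eq_of_mul_eq_mul_left hPpos ?_
  have key : ∀ j ∈ univ.filter (fun j => 1 ≤ f j),
      P * Nat.multinomial univ (Function.update f j (f j - 1)) = f j * (p - 1)! := by
    intro j hj
    have hj1 : 1 ≤ f j := (mem_filter.mp hj).2
    have hsum : ∑ i, Function.update f j (f j - 1) i = p - 1 := by
      rw [Finset.sum_update_of_mem (mem_univ j)]
      have := Finset.sum_eq_sum_sdiff_singleton_add (mem_univ j) f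
      omega
    have hprod : P = f j * ∏ i, (Function.update f j (f j - 1) i)! := by
      rw [update_comp' (fun _ k => k !), Finset.prod_update_of_mem (mem_univ j), hP,
        Finset.prod_eq_prod_diff_singleton_mul (mem_univ j) (fun i => (f i)!)]
      obtain ⟨q, hq⟩ : ∃ q, f j = q + 1 := ⟨f j - 1, by omega⟩
      rw [hq]
      simp [Nat.factorial_succ]
      ring
    rw [hprod, mul_assoc, Nat.multinomial_spec, hsum]
  rw [Finset.mul_sum, Finset.sum_congr rfl key]
  rw [← Finset.sum_mul, Nat.multinomial_spec]
  have : ∑ j ∈ univ.filter (fun j => 1 ≤ f j), f j = p := by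
    rw [hp]
    exact Finset.sum_filter_of_ne (fun j _ h => by omega)
  rw [this, Nat.mul_factorial_pred hf.ne']

/-- Tuples of length `N` of weight `m`. -/
noncomputable def WT (N m : ℕ) : Finset (Fin N → ℕ) :=
  (Fintype.piFinset fun _ => Finset.range (m + 1)).filter
    fun f => ∑ i, (i.1 + 1) * f i = m

lemma thTuples_eq_WT (n : ℕ) : thTuples n = WT n n := rfl

lemma mem_WT {N m : ℕ} {f : Fin N → ℕ} : f ∈ WT N m ↔ ∑ i, (i.1 + 1) * f i = m := by
  constructor
  · exact fun h => (Finset.mem_filter.mp h).2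
  · intro h
    refine Finset.mem_filter.mpr ⟨Fintype.mem_piFinset.mpr fun i => ?_, h⟩
    rw [Finset.mem_range]
    have h1 : (i.1 + 1) * f i ≤ m := h ▸
      Finset.single_le_sum (f := fun i => (i.1 + 1) * f i) (fun _ _ => Nat.zero_le _) (mem_univ i)
    have h2 : f i ≤ (i.1 + 1) * f i := Nat.le_mul_of_pos_left _ (Nat.succ_pos _)
    omega

lemma WT_eq_zero {N m : ℕ} {f : Fin N → ℕ} (hf : f ∈ WT N m) {i : Fin N} (hi : m ≤ i.1) :
    f i = 0 := by
  have h := mem_WT.mp hf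
  have h1 : (i.1 + 1) * f i ≤ m := h ▸
    Finset.single_le_sum (f := fun i => (i.1 + 1) * f i) (fun _ _ => Nat.zero_le _) (mem_univ i)
  nlinarith [Nat.zero_le (f i)]

def pad {m N : ℕ} (h : m ≤ N) (f : Fin m → ℕ) : Fin N → ℕ :=
  fun i => if h' : i.1 < m then f ⟨i.1, h'⟩ else 0

lemma prod_pad {m N : ℕ} (h : m ≤ N) (f : Fin m → ℕ) {M : Type*} [CommMonoid M]
    (F : ℕ → ℕ → M) (hF : ∀ i, F i 0 = 1) :
    ∏ i : Fin N, F i.1 (pad h f i) = ∏ i : Fin m, F i.1 (f i) := by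
  set g : ℕ → ℕ := fun j => if h' : j < m then f ⟨j, h'⟩ else 0 with hg
  have key : ∀ (K : ℕ), ∏ i : Fin K, F i.1 (g i.1) = ∏ j ∈ range K, F j (g j) :=
    fun K => Fin.prod_univ_eq_prod_range (fun j => F j (g j)) K
  have e1 : ∏ i : Fin N, F i.1 (pad h f i) = ∏ j ∈ range N, F j (g j) := key N
  have e2 : ∏ i : Fin m, F i.1 (f i) = ∏ j ∈ range m, F j (g j) := by
    refine (Finset.prod_congr rfl fun i _ => ?_).trans (key m)
    congr 1
    show f i = if h' : i.1 < m then f ⟨i.1, h'⟩ else 0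
    rw [dif_pos i.2]
  rw [e1, e2]
  refine (Finset.prod_subset (Finset.range_subset_range.mpr h) ?_).symm
  intro j _ hj
  rw [Finset.mem_range] at hj
  rw [hg]
  simp only [dif_neg hj]
  exact hF j

lemma sum_pad {m N : ℕ} (h : m ≤ N) (f : Fin m → ℕ) {M : Type*} [AddCommMonoid M]
    (F : ℕ → ℕ → M) (hF : ∀ i, F i 0 = 0) :
    ∑ i : Fin N, F i.1 (pad h f i) = ∑ i : Fin m, F i.1 (f i) :=
  prod_pad (M := Multiplicative M) h f F hF

lemma pad_restrict {m N : ℕ} (h : m ≤ N) (g : Fin N → ℕ)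
    (hg0 : ∀ i : Fin N, m ≤ i.1 → g i = 0) :
    pad h (fun i => g (Fin.castLE h i)) = g := by
  funext i
  by_cases hi : i.1 < m
  · simp only [pad, dif_pos hi]
    rfl
  · simp only [pad, dif_neg hi]
    exact (hg0 i (by omega)).symm

lemma multinomial_pad {m N : ℕ} (h : m ≤ N) (f : Fin m → ℕ) :
    Nat.multinomial univ (pad h f) = Nat.multinomial univ f := by
  unfold Nat.multinomial
  rw [sum_pad h f (fun _ k => k) (fun _ => rfl),
    prod_pad h f (fun _ k => k !) (fun _ => rfl)]

lemma sum_thTuples_pad {R : Type*} [CommRing R] {N m : ℕ} (h : m ≤ N)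
    (G : ℕ → ℕ → R → R) (a : ℕ → R) :
    ∑ f ∈ thTuples m, G (∑ i, f i) (Nat.multinomial univ f) (∏ i, a (i.1 + 1) ^ f i)
      = ∑ g ∈ WT N m, G (∑ i, g i) (Nat.multinomial univ g) (∏ i, a (i.1 + 1) ^ g i) := by
  rw [thTuples_eq_WT]
  refine Finset.sum_nbij' (fun f => pad h f) (fun g => fun i : Fin m => g (Fin.castLE h i))
    ?_ ?_ ?_ ?_ ?_
  · intro f hf
    rw [mem_WT] at hf ⊢
    rw [sum_pad h f (fun i k => (i + 1) * k) (fun _ => Nat.mul_zero _)]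
    exact hf
  · intro g hg
    have hg0 : ∀ i : Fin N, m ≤ i.1 → g i = 0 := fun i hi => WT_eq_zero hg hi
    rw [mem_WT] at hg ⊢
    have := sum_pad h (fun i : Fin m => g (Fin.castLE h i)) (fun i k => (i + 1) * k)
      (fun _ => Nat.mul_zero _)
    rw [pad_restrict h g hg0] at this
    rw [← this]
    exact hg
  · intro f hf
    funext i
    have hi : (Fin.castLE h i : ℕ) < m := i.2
    simp only [pad, dif_pos hi]
    rfl
  · intro g hg
    exact pad_restrict h g (fun i hi => WT_eq_zero hg hi)
  · intro f hf
    rw [sum_pad h f (fun _ k => k) (fun _ => rfl), multinomial_pad,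
      prod_pad h f (fun i k => a (i + 1) ^ k) (fun _ => pow_zero _)]

/-- weight of an update -/
lemma wt_update {N : ℕ} (g : Fin N → ℕ) (j : Fin N) (v : ℕ) :
    ∑ i, (i.1 + 1) * Function.update g j v i
      = (j.1 + 1) * v + ∑ i ∈ univ \ {j}, (i.1 + 1) * g i := by
  have : (fun i => (i.1 + 1) * Function.update g j v i)
      = Function.update (fun i => (i.1 + 1) * g i) j ((j.1 + 1) * v) :=
    update_comp' (fun i k => (i.1 + 1) * k) g j v
  calc ∑ i, (i.1 + 1) * Function.update g j v i
      = ∑ i, Function.update (fun i => (i.1 + 1) * g i) j ((j.1 + 1) * v) i := by rw [← this]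
    _ = _ := Finset.sum_update_of_mem (mem_univ j) _ _

lemma sum_update' {N : ℕ} (g : Fin N → ℕ) (j : Fin N) (v : ℕ) :
    ∑ i, Function.update g j v i = v + ∑ i ∈ univ \ {j}, g i :=
  Finset.sum_update_of_mem (mem_univ j) _ _

lemma prod_update' {N : ℕ} {R : Type*} [CommRing R] (a : ℕ → R) (g : Fin N → ℕ)
    (j : Fin N) (v : ℕ) :
    ∏ i, a (i.1 + 1) ^ Function.update g j v i
      = a (j.1 + 1) ^ v * ∏ i ∈ univ \ {j}, a (i.1 + 1) ^ g i := by
  have : (fun i => a (i.1 + 1) ^ Function.update g j v i)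
      = Function.update (fun i => a (i.1 + 1) ^ g i) j (a (j.1 + 1) ^ v) :=
    update_comp' (fun i k => a (i.1 + 1) ^ k) g j v
  calc ∏ i, a (i.1 + 1) ^ Function.update g j v i
      = ∏ i, Function.update (fun i => a (i.1 + 1) ^ g i) j (a (j.1 + 1) ^ v) i := by rw [← this]
    _ = _ := Finset.prod_update_of_mem (mem_univ j) _ _

lemma sigma_swap {R : Type*} [CommRing R] {n : ℕ} (a : ℕ → R) (T : (Fin n → ℕ) → R) :
    ∑ j : Fin n, ∑ g ∈ WT n (n - (j.1 + 1)), a (j.1 + 1) * T g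
      = ∑ f ∈ WT n n, ∑ j ∈ univ.filter (fun j => 1 ≤ f j),
          a (j.1 + 1) * T (Function.update f j (f j - 1)) := by
  calc ∑ j : Fin n, ∑ g ∈ WT n (n - (j.1 + 1)), a (j.1 + 1) * T g
      = ∑ x ∈ (univ : Finset (Fin n)).sigma (fun j => WT n (n - (j.1 + 1))),
          a (x.1.1 + 1) * T x.2 :=
        Finset.sum_sigma' (univ : Finset (Fin n)) (fun j => WT n (n - (j.1 + 1)))
          (fun j g => a (j.1 + 1) * T g)
    _ = ∑ y ∈ (WT n n).sigma (fun f => univ.filter (fun j => 1 ≤ f j)),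
          a (y.2.1 + 1) * T (Function.update y.1 y.2 (y.1 y.2 - 1)) := ?_
    _ = ∑ f ∈ WT n n, ∑ j ∈ univ.filter (fun j => 1 ≤ f j),
          a (j.1 + 1) * T (Function.update f j (f j - 1)) :=
        (Finset.sum_sigma' (WT n n) (fun f => univ.filter (fun j => 1 ≤ f j))
          (fun f j => a (j.1 + 1) * T (Function.update f j (f j - 1)))).symm
  refine Finset.sum_nbij'
    (fun x => ⟨Function.update x.2 x.1 (x.2 x.1 + 1), x.1⟩)
    (fun y => ⟨y.2, Function.update y.1 y.2 (y.1 y.2 - 1)⟩) ?_ ?_ ?_ ?_ ?_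
  · rintro ⟨j, g⟩ hx
    have hg : ∑ i, (i.1 + 1) * g i = n - (j.1 + 1) :=
      mem_WT.mp (Finset.mem_sigma.mp hx).2
    refine Finset.mem_sigma.mpr ⟨?_, ?_⟩
    · show Function.update g j (g j + 1) ∈ WT n n
      rw [mem_WT, wt_update]
      have hsplit := Finset.sum_eq_sum_sdiff_singleton_add (mem_univ j)
        (fun i => (i.1 + 1) * g i)
      have hj : j.1 + 1 ≤ n := j.2
      have : (j.1 + 1) * (g j + 1) = (j.1 + 1) * g j + (j.1 + 1) := by ring
      omega
    · show j ∈ univ.filter (fun j' => 1 ≤ Function.update g j (g j + 1) j')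
      rw [Finset.mem_filter, Function.update_self]
      exact ⟨mem_univ _, by omega⟩
  · rintro ⟨f, j⟩ hy
    have hf : ∑ i, (i.1 + 1) * f i = n := mem_WT.mp (Finset.mem_sigma.mp hy).1
    have hj1 : 1 ≤ f j := (Finset.mem_filter.mp (Finset.mem_sigma.mp hy).2).2
    refine Finset.mem_sigma.mpr ⟨mem_univ _, ?_⟩
    show Function.update f j (f j - 1) ∈ WT n (n - (j.1 + 1))
    rw [mem_WT, wt_update]
    have hsplit := Finset.sum_eq_sum_sdiff_singleton_add (mem_univ j)
      (fun i => (i.1 + 1) * f i)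
    have hj2 : j.1 + 1 ≤ n := j.2
    have : (j.1 + 1) * f j = (j.1 + 1) * (f j - 1) + (j.1 + 1) := by
      obtain ⟨q, hq⟩ : ∃ q, f j = q + 1 := ⟨f j - 1, by omega⟩
      rw [hq]
      simp
      ring
    omega
  · rintro ⟨j, g⟩ hx
    show (⟨j, Function.update (Function.update g j (g j + 1)) j
      (Function.update g j (g j + 1) j - 1)⟩ : Σ _ : Fin n, Fin n → ℕ) = ⟨j, g⟩
    congr 1
    rw [Function.update_self, Function.update_idem]
    simp
  · rintro ⟨f, j⟩ hy
    rw [Finset.mem_sigma, Finset.mem_filter] at hy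
    have hj1 : 1 ≤ f j := hy.2.2
    show (⟨Function.update (Function.update f j (f j - 1)) j
      (Function.update f j (f j - 1) j + 1), j⟩ : Σ _ : Fin n → ℕ, Fin n) = ⟨f, j⟩
    congr 1
    rw [Function.update_self, Function.update_idem]
    rw [show f j - 1 + 1 = f j by omega]
    simp
  · rintro ⟨j, g⟩ hx
    show a (j.1 + 1) * T g = a (j.1 + 1) * T (Function.update
      (Function.update g j (g j + 1)) j (Function.update g j (g j + 1) j - 1))
    rw [Function.update_self, Function.update_idem]
    simp

end Aux

set_option maxHeartbeats 1600000 in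
theorem inverse_powerSeries_multinomial {R : Type*} [CommRing R] (a : ℕ → R) (u : Rˣ)
    (hu : (u : R) = a 0) (b : ℕ → R)
    (hb0 : b 0 = (↑u⁻¹ : R))
    (hb : ∀ n : ℕ, 1 ≤ n → b n =
      ∑ f ∈ thTuples n,
        (-1 : R) ^ (∑ i, f i) *
          (Nat.multinomial Finset.univ f) •
            ((↑u⁻¹ : R) ^ (∑ i, f i + 1) * ∏ i, a (i.1 + 1) ^ f i)) :
    PowerSeries.mk a * PowerSeries.mk b = 1 := by
  -- the explicit formula also holds at 0
  have hb' : ∀ m : ℕ, b m =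
      ∑ f ∈ thTuples m,
        (-1 : R) ^ (∑ i, f i) *
          (Nat.multinomial Finset.univ f) •
            ((↑u⁻¹ : R) ^ (∑ i, f i + 1) * ∏ i, a (i.1 + 1) ^ f i) := by
    intro m
    rcases Nat.eq_zero_or_pos m with rfl | hm
    · have h0 : thTuples 0 = {fun i : Fin 0 => (0 : ℕ)} := by
        refine Finset.eq_singleton_iff_unique_mem.mpr ⟨?_, ?_⟩
        · rw [thTuples_eq_WT, mem_WT]
          simp
        · intro f _
          funext i
          exact i.elim0
      rw [hb0, h0, Finset.sum_singleton]
      simp [Nat.multinomial]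
    · exact hb m hm
  ext n
  rw [PowerSeries.coeff_mul, PowerSeries.coeff_one]
  simp only [PowerSeries.coeff_mk]
  rcases Nat.eq_zero_or_pos n with rfl | hn
  · simp [← hu, hb0]
  · rw [if_neg (by omega)]
    rw [Finset.Nat.sum_antidiagonal_eq_sum_range_succ_mk, Finset.sum_range_succ']
    set T : (Fin n → ℕ) → R := fun g =>
      (-1 : R) ^ (∑ i, g i) *
        (Nat.multinomial Finset.univ g) •
          ((↑u⁻¹ : R) ^ (∑ i, g i + 1) * ∏ i, a (i.1 + 1) ^ g i) with hT
    have step2 : ∀ j : Fin n, b (n - (j.1 + 1)) = ∑ g ∈ WT n (n - (j.1 + 1)), T g := by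
      intro j
      rw [hb' _]
      exact sum_thTuples_pad (Nat.sub_le n (j.1 + 1))
        (fun p M pr => (-1 : R) ^ p * M • ((↑u⁻¹ : R) ^ (p + 1) * pr)) a
    have e3 : ∑ i ∈ range n, a (i + 1) * b (n - (i + 1))
        = ∑ j : Fin n, a (j.1 + 1) * b (n - (j.1 + 1)) :=
      (Fin.sum_univ_eq_sum_range (fun i => a (i + 1) * b (n - (i + 1))) n).symm
    rw [e3]
    have e4 : ∑ j : Fin n, a (j.1 + 1) * b (n - (j.1 + 1))
        = ∑ f ∈ WT n n, ∑ j ∈ univ.filter (fun j => 1 ≤ f j),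
            a (j.1 + 1) * T (Function.update f j (f j - 1)) := by
      rw [show ∑ j : Fin n, a (j.1 + 1) * b (n - (j.1 + 1))
          = ∑ j : Fin n, ∑ g ∈ WT n (n - (j.1 + 1)), a (j.1 + 1) * T g from
        Finset.sum_congr rfl fun j _ => by rw [step2 j, Finset.mul_sum]]
      exact sigma_swap a T
    rw [e4]
    rw [show ((0 : ℕ), n - 0).1 = 0 from rfl, show ((0 : ℕ), n - 0).2 = n from Nat.sub_zero n]
    have e5 : a 0 * b n = ∑ f ∈ WT n n, (u : R) * T f := by
      rw [hb' n, thTuples_eq_WT, ← hu, Finset.mul_sum]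
    rw [e5, ← Finset.sum_add_distrib]
    refine Finset.sum_eq_zero fun f hf => ?_
    have hwt := mem_WT.mp hf
    have hp : 0 < ∑ i, f i := by
      rcases Nat.eq_zero_or_pos (∑ i, f i) with h0 | h
      · exfalso
        rw [Finset.sum_eq_zero_iff] at h0
        have : ∑ i, (i.1 + 1) * f i = 0 :=
          Finset.sum_eq_zero fun i _ => by rw [h0 i (mem_univ i), Nat.mul_zero]
        omega
      · exact h
    have hcast : ∀ g : Fin n → ℕ, T g = (-1 : R) ^ (∑ i, g i) *
        (((Nat.multinomial Finset.univ g : ℕ) : R) *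
          ((↑u⁻¹ : R) ^ ((∑ i, g i) + 1) * ∏ i, a (i.1 + 1) ^ g i)) := by
      intro g
      show (-1 : R) ^ (∑ i, g i) *
        (Nat.multinomial Finset.univ g) •
          ((↑u⁻¹ : R) ^ ((∑ i, g i) + 1) * ∏ i, a (i.1 + 1) ^ g i) = _
      rw [nsmul_eq_mul]
    have key : ∀ j ∈ univ.filter (fun j => 1 ≤ f j),
        a (j.1 + 1) * T (Function.update f j (f j - 1))
          = ((Nat.multinomial univ (Function.update f j (f j - 1)) : ℕ) : R) *
              ((-1 : R) ^ ((∑ i, f i) - 1) *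
                ((↑u⁻¹ : R) ^ (∑ i, f i) * ∏ i, a (i.1 + 1) ^ f i)) := by
      intro j hj
      have hj1 : 1 ≤ f j := (Finset.mem_filter.mp hj).2
      have hq : ∑ i, Function.update f j (f j - 1) i = (∑ i, f i) - 1 := by
        rw [sum_update']
        have := Finset.sum_eq_sum_sdiff_singleton_add (mem_univ j) f
        omega
      have hpr : a (j.1 + 1) * ∏ i, a (i.1 + 1) ^ Function.update f j (f j - 1) i
          = ∏ i, a (i.1 + 1) ^ f i := by
        rw [prod_update',
          Finset.prod_eq_prod_diff_singleton_mul (mem_univ j) (fun i => a (i.1 + 1) ^ f i)]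
        obtain ⟨q, hqq⟩ : ∃ q, f j = q + 1 := ⟨f j - 1, by omega⟩
        rw [hqq]
        simp only [Nat.add_sub_cancel]
        rw [pow_succ]
        ring
      rw [hcast, hq]
      rw [show (∑ i, f i) - 1 + 1 = ∑ i, f i from by omega]
      rw [← hpr]
      ring
    rw [Finset.sum_congr rfl key, ← Finset.sum_mul, ← Nat.cast_sum,
      multinomial_deriv f hp, hcast f]
    have hinv : (↑u⁻¹ : R) * (u : R) = 1 := u.inv_mul
    obtain ⟨q, hq⟩ : ∃ q, ∑ i, f i = q + 1 := ⟨(∑ i, f i) - 1, by omega⟩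
    rw [hq]
    simp only [Nat.add_sub_cancel]
    linear_combination (-((-1 : R) ^ q) * (Nat.multinomial univ f : R) *
      ((↑u⁻¹ : R) ^ (q + 1)) * (∏ i, a (i.1 + 1) ^ f i)) * hinv
end

section
/- For every positive integer k ≥ 1 and every nonnegative integer n, the following identity holds in ℤ: C(n+k-1, n) = ∑ (-1)^{n-p} · (p!/(i_1! i_2! ⋯ i_k!)) · C(k,1)^{i_1} C(k,2)^{i_2} ⋯ C(k,k)^{i_k}, where the sum ranges over all k-tuples (i_1,…,i_k) of nonnegative integers with i_1 + 2i_2 + ⋯ + k·i_k = n and p = i_1 + i_2 + ⋯ + i_k. -/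
open Finset

theorem choose_eq_sum_multinomial (k n : ℕ) (hk : 1 ≤ k) :
    ((n + k - 1).choose n : ℤ) =
      ∑ f ∈ (Fintype.piFinset fun _ : Fin k => Finset.range (n + 1)).filter
          (fun f => ∑ j, (j.1 + 1) * f j = n),
        (-1 : ℤ) ^ (n - ∑ j, f j) * (Nat.multinomial Finset.univ f : ℤ) *
          ∏ j, (k.choose (j.1 + 1) : ℤ) ^ f j := by
  classical
  set g : ℕ → PowerSeries ℤ :=
    fun i => PowerSeries.C ((-1) ^ i * (k.choose (i + 1) : ℤ)) * PowerSeries.X ^ (i + 1)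
    with hg
  set h : PowerSeries ℤ := ∑ j : Fin k, g j with hh
  -- key identity : h = 1 - (1 - X)^k
  have expand : (1 - PowerSeries.X : PowerSeries ℤ) ^ k =
      ∑ i ∈ range (k + 1),
        PowerSeries.C ((-1) ^ i * (k.choose i : ℤ)) * PowerSeries.X ^ i := by
    rw [sub_eq_add_neg, add_comm, add_pow]
    refine Finset.sum_congr rfl fun i _ => ?_
    rw [neg_pow, one_pow, mul_one, map_mul, map_pow, map_neg, map_one, map_natCast]
    ring
  have h1 : h = 1 - (1 - PowerSeries.X) ^ k := by
    rw [expand, Finset.sum_range_succ']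
    simp only [pow_zero, mul_one, Nat.choose_zero_right, Nat.cast_one, one_mul, map_one]
    rw [hh, Fin.sum_univ_eq_sum_range g k]
    have : ∀ i ∈ range k,
        PowerSeries.C ((-1) ^ (i + 1) * (k.choose (i + 1) : ℤ)) * PowerSeries.X ^ (i + 1)
          = - g i := by
      intro i _
      have e : ((-1 : ℤ)) ^ (i + 1) * (k.choose (i + 1) : ℤ)
          = -((-1) ^ i * (k.choose (i + 1) : ℤ)) := by ring
      rw [e, map_neg, hg, neg_mul]
    rw [Finset.sum_congr rfl this, Finset.sum_neg_distrib]
    ring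
  -- coefficient of h ^ p
  have hcoeff : ∀ p : ℕ, (PowerSeries.coeff n) (h ^ p) =
      ∑ f ∈ (Finset.piAntidiag (univ : Finset (Fin k)) p).filter
          (fun f => ∑ j, (j.1 + 1) * f j = n),
        (Nat.multinomial Finset.univ f : ℤ) *
          ∏ j : Fin k, ((-1 : ℤ) ^ (j.1 : ℕ) * (k.choose (j.1 + 1) : ℤ)) ^ f j := by
    intro p
    rw [hh, Finset.sum_pow_eq_sum_piAntidiag, map_sum, Finset.sum_filter]
    refine Finset.sum_congr rfl fun f hf => ?_
    have hprod : ∏ j : Fin k, (g j) ^ f j =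
        PowerSeries.C (∏ j : Fin k, ((-1 : ℤ) ^ (j.1 : ℕ) * (k.choose (j.1 + 1) : ℤ)) ^ f j)
          * PowerSeries.X ^ (∑ j : Fin k, (j.1 + 1) * f j) := by
      rw [map_prod, ← Finset.prod_pow_eq_pow_sum, ← Finset.prod_mul_distrib]
      refine Finset.prod_congr rfl fun j _ => ?_
      rw [hg]
      rw [mul_pow, map_pow, ← pow_mul, mul_comm (j.1 + 1) (f j), pow_mul]
    rw [hprod]
    have hcast : ((Nat.multinomial Finset.univ f : ℕ) : PowerSeries ℤ)
        = PowerSeries.C ((Nat.multinomial Finset.univ f : ℤ)) := by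
      simp
    rw [hcast, ← mul_assoc, ← map_mul, PowerSeries.coeff_C_mul_X_pow]
    by_cases hfn : ∑ j : Fin k, (j.1 + 1) * f j = n
    · rw [if_pos hfn, if_pos hfn.symm]
    · rw [if_neg hfn, if_neg fun e => hfn e.symm]
  -- geometric sum
  have hXdvd : (PowerSeries.X : PowerSeries ℤ) ∣ h := by
    rw [PowerSeries.X_dvd_iff, hh, map_sum]
    refine Finset.sum_eq_zero fun j _ => ?_
    rw [hg]
    simp [pow_succ]
  have geom : (∑ p ∈ range (n + 1), h ^ p) * ((1 - PowerSeries.X) ^ k)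
      = 1 - h ^ (n + 1) := by
    have hgs := geom_sum_mul h (n + 1)
    have h2 : (1 - PowerSeries.X : PowerSeries ℤ) ^ k = 1 - h := by
      rw [h1]; ring
    rw [h2]
    linear_combination -hgs
  have hsum : ∑ p ∈ range (n + 1), h ^ p
      = (1 - h ^ (n + 1)) * (PowerSeries.invOneSubPow ℤ k).val := by
    have hu : ((1 - PowerSeries.X : PowerSeries ℤ) ^ k)
        * (PowerSeries.invOneSubPow ℤ k).val = 1 := by
      rw [← PowerSeries.invOneSubPow_inv_eq_one_sub_pow]
      exact (PowerSeries.invOneSubPow ℤ k).inv_val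
    calc ∑ p ∈ range (n + 1), h ^ p
        = (∑ p ∈ range (n + 1), h ^ p) * (((1 - PowerSeries.X) ^ k)
            * (PowerSeries.invOneSubPow ℤ k).val) := by rw [hu, mul_one]
      _ = (1 - h ^ (n + 1)) * (PowerSeries.invOneSubPow ℤ k).val := by
          rw [← mul_assoc, geom]
  have hcoeff_sum : (PowerSeries.coeff n) (∑ p ∈ range (n + 1), h ^ p)
      = ((n + k - 1).choose n : ℤ) := by
    rw [hsum, sub_mul, one_mul, map_sub]
    have hz : (PowerSeries.coeff n) (h ^ (n + 1) * (PowerSeries.invOneSubPow ℤ k).val)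
        = 0 := by
      obtain ⟨w, hw⟩ := pow_dvd_pow_of_dvd hXdvd (n + 1)
      rw [hw, mul_assoc, PowerSeries.coeff_X_pow_mul']
      simp
    rw [hz, sub_zero, PowerSeries.invOneSubPow_val_eq_mk_sub_one_add_choose_of_pos ℤ k hk,
      PowerSeries.coeff_mk]
    have h3 : k - 1 + n = n + k - 1 := by omega
    have h4 : (n + k - 1) - (k - 1) = n := by omega
    have h5 := Nat.choose_symm (show k - 1 ≤ n + k - 1 by omega)
    rw [h4] at h5
    rw [h3, ← h5]
  -- reindex the target sum via fibers of p = ∑ f j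
  rw [← hcoeff_sum, map_sum]
  have hmaps : ∀ f ∈ (Fintype.piFinset fun _ : Fin k => Finset.range (n + 1)).filter
      (fun f => ∑ j, (j.1 + 1) * f j = n), (∑ j, f j) ∈ range (n + 1) := by
    intro f hf
    rw [Finset.mem_filter] at hf
    rw [Finset.mem_range, Nat.lt_succ_iff, ← hf.2]
    exact Finset.sum_le_sum fun j _ => Nat.le_mul_of_pos_left _ (Nat.succ_pos _)
  rw [eq_comm, ← Finset.sum_fiberwise_of_maps_to hmaps]
  refine Finset.sum_congr rfl fun p hp => ?_
  rw [hcoeff p]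
  have hset : ((Fintype.piFinset fun _ : Fin k => Finset.range (n + 1)).filter
        (fun f => ∑ j, (j.1 + 1) * f j = n)).filter (fun f => ∑ j, f j = p)
      = (Finset.piAntidiag (univ : Finset (Fin k)) p).filter
        (fun f => ∑ j, (j.1 + 1) * f j = n) := by
    ext f
    constructor
    · intro hfm
      simp only [Finset.mem_filter, Fintype.mem_piFinset, Finset.mem_range] at hfm
      obtain ⟨⟨-, hwn⟩, hsp⟩ := hfm
      rw [Finset.mem_filter, Finset.mem_piAntidiag]
      exact ⟨⟨by simpa using hsp, fun i _ => Finset.mem_univ i⟩, hwn⟩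
    · intro hfm
      rw [Finset.mem_filter, Finset.mem_piAntidiag] at hfm
      obtain ⟨⟨hsp, -⟩, hwn⟩ := hfm
      simp only [Finset.mem_filter, Fintype.mem_piFinset, Finset.mem_range]
      refine ⟨⟨fun j => Nat.lt_succ_of_le ?_, hwn⟩, by simpa using hsp⟩
      calc f j ≤ (j.1 + 1) * f j := Nat.le_mul_of_pos_left _ (Nat.succ_pos _)
        _ ≤ ∑ i, (i.1 + 1) * f i :=
            Finset.single_le_sum (f := fun i : Fin k => (i.1 + 1) * f i)
              (fun i _ => Nat.zero_le _) (Finset.mem_univ j)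
        _ = n := hwn
  rw [hset]
  refine Finset.sum_congr rfl fun f hf => ?_
  rw [Finset.mem_filter, Finset.mem_piAntidiag] at hf
  obtain ⟨⟨hsp, -⟩, hwn⟩ := hf
  have hsp' : ∑ j : Fin k, f j = p := by simpa using hsp
  have hjf : ∑ j : Fin k, (j.1 : ℕ) * f j = n - p := by
    have hsplit : ∑ j : Fin k, (j.1 + 1) * f j
        = (∑ j : Fin k, (j.1 : ℕ) * f j) + ∑ j : Fin k, f j := by
      rw [← Finset.sum_add_distrib]
      exact Finset.sum_congr rfl fun j _ => by ring
    omega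
  have hprodsplit : ∏ j : Fin k, ((-1 : ℤ) ^ (j.1 : ℕ) * (k.choose (j.1 + 1) : ℤ)) ^ f j
      = (-1 : ℤ) ^ (n - p) * ∏ j : Fin k, (k.choose (j.1 + 1) : ℤ) ^ f j := by
    rw [← hjf, ← Finset.prod_pow_eq_pow_sum, ← Finset.prod_mul_distrib]
    refine Finset.prod_congr rfl fun j _ => ?_
    rw [mul_pow, ← pow_mul]
  rw [hprodsplit, hsp']
  ring
end

section
/- Let R be a commutative ring, a : ℕ → R, and S = ∑_{i≥0} a_i X^i ∈ R⟦X⟧. For k ∈ ℕ write a_n^{(k)} for the coefficient of X^n in S^k. Then for all k ≥ 1 and all n ≥ 0: a_{n+1}^{(k)} = k · a_{n+1} · a_0^{k-1} + ∑_{i=1}^{n} a_i · (∑_{l=1}^{k-1} a_0^{l-1} · a_{n+1-i}^{(k-l)}). -/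
open Finset PowerSeries

theorem coeff_pow_recurrence {R : Type*} [CommRing R] (a : ℕ → R) (k : ℕ) (hk : 1 ≤ k)
    (n : ℕ) :
    PowerSeries.coeff (n + 1) ((PowerSeries.mk a) ^ k) =
      k • (a (n + 1) * a 0 ^ (k - 1)) +
        ∑ i ∈ Finset.Icc 1 n, a i *
          ∑ l ∈ Finset.Icc 1 (k - 1),
            a 0 ^ (l - 1) * PowerSeries.coeff (n + 1 - i) ((PowerSeries.mk a) ^ (k - l)) := by
  induction k, hk using Nat.le_induction with
  | base => simp
  | succ k hk ih =>
    obtain ⟨m, rfl⟩ : ∃ m, k = m + 1 := ⟨k - 1, (Nat.succ_pred_eq_of_pos hk).symm⟩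
    have key : (PowerSeries.coeff (n + 1)) (PowerSeries.mk a ^ (m + 1 + 1)) =
        ∑ i ∈ Finset.range (n + 2),
          a i * PowerSeries.coeff (n + 1 - i) (PowerSeries.mk a ^ (m + 1)) := by
      rw [pow_succ', PowerSeries.coeff_mul, Finset.Nat.sum_antidiagonal_eq_sum_range_succ_mk]
      simp [PowerSeries.coeff_mk]
    have c0 : PowerSeries.coeff 0 (PowerSeries.mk a ^ (m + 1)) = a 0 ^ (m + 1) := by
      simp [PowerSeries.coeff_zero_eq_constantCoeff]
    have T : ∀ i : ℕ,
        ∑ l ∈ Finset.Icc 1 (m + 1 + 1 - 1),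
          a 0 ^ (l - 1) * PowerSeries.coeff (n + 1 - i) (PowerSeries.mk a ^ (m + 1 + 1 - l)) =
        PowerSeries.coeff (n + 1 - i) (PowerSeries.mk a ^ (m + 1)) +
          a 0 * ∑ l ∈ Finset.Icc 1 (m + 1 - 1),
            a 0 ^ (l - 1) * PowerSeries.coeff (n + 1 - i) (PowerSeries.mk a ^ (m + 1 - l)) := by
      intro i
      rw [← Finset.Ico_add_one_right_eq_Icc, ← Finset.Ico_add_one_right_eq_Icc, Finset.sum_Ico_eq_sum_range,
        Finset.sum_Ico_eq_sum_range, Finset.mul_sum]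
      simp only [Nat.succ_sub_one, Nat.add_sub_cancel]
      rw [Finset.sum_range_succ']
      simp only [Nat.add_sub_cancel, pow_zero, one_mul, Nat.add_sub_cancel_left]
      rw [add_comm]
      congr 1
      apply Finset.sum_congr rfl
      intro j hj
      have h2 : m + 1 + 1 - (1 + (j + 1)) = m + 1 - (1 + j) := by omega
      rw [h2, pow_succ]
      ring
    rw [key, Finset.sum_range_succ, Finset.sum_range_succ']
    have hnn : n + 1 - (n + 1) = 0 := by omega
    rw [hnn, c0]
    simp only [Nat.sub_zero]
    rw [ih]
    have hA : ∑ i ∈ Finset.Icc 1 n,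
          a i * PowerSeries.coeff (n + 1 - i) (PowerSeries.mk a ^ (m + 1)) =
        ∑ j ∈ Finset.range n,
          a (j + 1) * PowerSeries.coeff (n + 1 - (j + 1)) (PowerSeries.mk a ^ (m + 1)) := by
      rw [← Finset.Ico_add_one_right_eq_Icc, Finset.sum_Ico_eq_sum_range]
      simp only [Nat.add_sub_cancel]
      exact Finset.sum_congr rfl fun j _ => by rw [add_comm 1 j]
    have hsm : ((m + 1 + 1) : ℕ) • (a (n + 1) * a 0 ^ (m + 1 + 1 - 1)) =
        a 0 * ((m + 1 : ℕ) • (a (n + 1) * a 0 ^ (m + 1 - 1))) + a (n + 1) * a 0 ^ (m + 1) := by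
      simp only [Nat.add_sub_cancel, succ_nsmul, nsmul_eq_mul]
      ring
    simp only [T]
    rw [← hA, hsm]
    have hS : a 0 * ∑ i ∈ Finset.Icc 1 n, (a i *
          ∑ l ∈ Finset.Icc 1 (m + 1 - 1),
            a 0 ^ (l - 1) * PowerSeries.coeff (n + 1 - i) (PowerSeries.mk a ^ (m + 1 - l))) =
        ∑ i ∈ Finset.Icc 1 n, (a i * (a 0 *
          ∑ l ∈ Finset.Icc 1 (m + 1 - 1),
            a 0 ^ (l - 1) * PowerSeries.coeff (n + 1 - i) (PowerSeries.mk a ^ (m + 1 - l)))) := by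
      rw [Finset.mul_sum]
      exact Finset.sum_congr rfl fun i _ => by ring
    simp only [mul_add, Finset.sum_add_distrib]
    rw [hS]
    ring
end

section
/- For every n ≥ 1, the n-th Bernoulli number satisfies bernoulli n = n! · ∑ (l!/(k_1!⋯k_n!)) · (-1/2!)^{k_1} (-1/3!)^{k_2} ⋯ (-1/(n+1)!)^{k_n}, where the sum ranges over all n-tuples (k_1,…,k_n) of nonnegative integers with k_1 + 2k_2 + ⋯ + n·k_n = n and l = k_1 + ⋯ + k_n. -/
open Finset

open PowerSeries

noncomputable def Gs : ℚ⟦X⟧ := PowerSeries.mk fun m => 1 / (m + 1).factorial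

lemma X_mul_Gs : X * Gs = exp ℚ - 1 := by
  ext k
  cases k with
  | zero => simp [Gs, coeff_exp]
  | succ k => simp [Gs, coeff_succ_X_mul, coeff_exp, coeff_one]

lemma bps_mul_Gs : bernoulliPowerSeries ℚ * Gs = 1 := by
  have h := bernoulliPowerSeries_mul_exp_sub_one ℚ
  rw [← X_mul_Gs] at h
  apply mul_left_cancel₀ (X_ne_zero (R := ℚ))
  rw [mul_one]; linear_combination h

lemma coeff_bps (n : ℕ) :
    coeff (R := ℚ) n (bernoulliPowerSeries ℚ) = bernoulli n / n.factorial := by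
  simp [bernoulliPowerSeries, coeff_mk]

lemma constCoeff_one_sub_Gs : constantCoeff (R := ℚ) (1 - Gs) = 0 := by
  simp [Gs, ← coeff_zero_eq_constantCoeff]

lemma coeff_bps_eq_geom (n : ℕ) :
    coeff (R := ℚ) n (bernoulliPowerSeries ℚ) =
      coeff (R := ℚ) n (∑ l ∈ range (n + 1), (1 - Gs) ^ l) := by
  have hg : (∑ l ∈ range (n + 1), (1 - Gs) ^ l) * Gs = 1 - (1 - Gs) ^ (n + 1) := by
    have := geom_sum_mul (1 - Gs) (n + 1)
    have h2 : (1 - Gs) - 1 = -Gs := by ring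
    rw [h2] at this
    linear_combination -this
  have key : (∑ l ∈ range (n + 1), (1 - Gs) ^ l) =
      bernoulliPowerSeries ℚ - bernoulliPowerSeries ℚ * (1 - Gs) ^ (n + 1) := by
    calc (∑ l ∈ range (n + 1), (1 - Gs) ^ l)
        = bernoulliPowerSeries ℚ * ((∑ l ∈ range (n + 1), (1 - Gs) ^ l) * Gs) := by
          rw [mul_comm (∑ l ∈ range (n + 1), (1 - Gs) ^ l), ← mul_assoc, bps_mul_Gs, one_mul]
      _ = _ := by rw [hg]; ring
  rw [key, map_sub]
  symm
  rw [sub_eq_self]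
  have hdvd : (X : ℚ⟦X⟧) ^ (n + 1) ∣ bernoulliPowerSeries ℚ * (1 - Gs) ^ (n + 1) := by
    exact Dvd.dvd.mul_left (pow_dvd_pow_of_dvd (X_dvd_iff.mpr constCoeff_one_sub_Gs) _) _
  obtain ⟨c, hc⟩ := hdvd
  rw [hc, coeff_X_pow_mul']
  simp

lemma coeff_pow_congr {φ ψ : ℚ⟦X⟧} {n : ℕ}
    (h : ∀ m ≤ n, coeff (R := ℚ) m φ = coeff (R := ℚ) m ψ) (l : ℕ) :
    ∀ m ≤ n, coeff (R := ℚ) m (φ ^ l) = coeff (R := ℚ) m (ψ ^ l) := by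
  induction l with
  | zero => intro m _; rfl
  | succ l ih =>
    intro m hm
    rw [pow_succ, pow_succ, coeff_mul, coeff_mul]
    refine Finset.sum_congr rfl fun p hp => ?_
    rw [Finset.HasAntidiagonal.mem_antidiagonal] at hp
    rw [ih p.1 (by omega), h p.2 (by omega)]

noncomputable def Qs (n : ℕ) : ℚ⟦X⟧ :=
  ∑ m ∈ Icc 1 n, PowerSeries.C (R := ℚ) (-(1 : ℚ) / (m + 1).factorial) * X ^ m

lemma coeff_Qs (n m : ℕ) (hm : m ≤ n) :
    coeff (R := ℚ) m (Qs n) = if m = 0 then 0 else -(1 : ℚ) / (m + 1).factorial := by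
  rw [Qs, map_sum]
  simp only [coeff_C_mul, coeff_X_pow]
  rcases Nat.eq_zero_or_pos m with rfl | hm0
  · rw [Finset.sum_eq_zero]
    · simp
    intro j hj
    rw [Finset.mem_Icc] at hj
    rw [if_neg (by omega), mul_zero]
  · rw [Finset.sum_eq_single m]
    · simp [hm0.ne']
    · intro j _ hj; rw [if_neg (Ne.symm hj), mul_zero]
    · intro h; exact absurd (Finset.mem_Icc.mpr ⟨hm0, hm⟩) h

lemma coeff_Qs_pow (n l : ℕ) :
    coeff (R := ℚ) n (Qs n ^ l) =
      ∑ k ∈ (Finset.piAntidiag (Icc 1 n) l).filter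
          (fun k => ∑ m ∈ Icc 1 n, m * k m = n),
        (Nat.multinomial (Icc 1 n) k : ℚ) *
          ∏ m ∈ Icc 1 n, (-(1 : ℚ) / (m + 1).factorial) ^ k m := by
  rw [Qs, Finset.sum_pow_eq_sum_piAntidiag, map_sum, Finset.sum_filter]
  refine Finset.sum_congr rfl fun k hk => ?_
  have hprod : ∏ m ∈ Icc 1 n, (PowerSeries.C (R := ℚ) (-(1 : ℚ) / (m + 1).factorial) * X ^ m) ^ k m
      = PowerSeries.C (R := ℚ) (∏ m ∈ Icc 1 n, (-(1 : ℚ) / (m + 1).factorial) ^ k m)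
        * X ^ (∑ m ∈ Icc 1 n, m * k m) := by
    rw [map_prod, ← Finset.prod_pow_eq_pow_sum, ← Finset.prod_mul_distrib]
    refine Finset.prod_congr rfl fun m _ => ?_
    rw [mul_pow, map_pow, ← pow_mul, mul_comm m (k m), pow_mul]
  rw [hprod, ← map_natCast (PowerSeries.C (R := ℚ)) (Nat.multinomial (Icc 1 n) k), ← mul_assoc,
    ← map_mul, coeff_C_mul, coeff_X_pow]
  by_cases h : ∑ m ∈ Icc 1 n, m * k m = n
  · rw [if_pos h, if_pos (by omega), mul_one]
  · rw [if_neg h, if_neg (by omega), mul_zero]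


lemma prod_fin_eq_prod_Icc {M : Type*} [CommMonoid M] (n : ℕ) (g : ℕ → M) :
    ∏ i : Fin n, g (i + 1) = ∏ m ∈ Icc 1 n, g m := by
  rw [Fin.prod_univ_eq_prod_range (fun i => g (i + 1))]
  induction n with
  | zero => simp
  | succ n ih => rw [Finset.prod_range_succ, ih, Finset.prod_Icc_succ_top (by omega)]

lemma sum_fin_eq_sum_Icc {M : Type*} [AddCommMonoid M] (n : ℕ) (g : ℕ → M) :
    ∑ i : Fin n, g (i + 1) = ∑ m ∈ Icc 1 n, g m := by
  rw [Fin.sum_univ_eq_sum_range (fun i => g (i + 1))]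
  induction n with
  | zero => simp
  | succ n ih => rw [Finset.sum_range_succ, ih, Finset.sum_Icc_succ_top (by omega)]

lemma combinat (n : ℕ) :
    ∑ l ∈ range (n + 1), ∑ k ∈ (Finset.piAntidiag (Icc 1 n) l).filter
          (fun k => ∑ m ∈ Icc 1 n, m * k m = n),
        (Nat.multinomial (Icc 1 n) k : ℚ) *
          ∏ m ∈ Icc 1 n, (-(1 : ℚ) / (m + 1).factorial) ^ k m
    = ∑ f ∈ thTuples n, (Nat.multinomial Finset.univ f : ℚ) *
        ∏ i, (-(1 : ℚ) / ((i.1 + 2).factorial : ℚ)) ^ f i := by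
  classical
  rw [← Finset.sum_biUnion]
  · refine Finset.sum_nbij' (fun k => fun i : Fin n => k (i.1 + 1))
      (fun f => fun m => if h : 1 ≤ m ∧ m ≤ n then f ⟨m - 1, by omega⟩ else 0)
      ?_ ?_ ?_ ?_ ?_
    · -- maps to thTuples
      intro k hk
      rw [Finset.mem_biUnion] at hk
      obtain ⟨l, _, hk⟩ := hk
      rw [Finset.mem_filter, Finset.mem_piAntidiag] at hk
      obtain ⟨⟨_, hsupp⟩, hw⟩ := hk
      rw [thTuples, Finset.mem_filter]
      refine ⟨?_, ?_⟩
      · rw [Fintype.mem_piFinset]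
        intro i
        rw [Finset.mem_range]
        by_cases hz : k (i.1 + 1) = 0
        · omega
        · have h1 : (i.1 + 1) * k (i.1 + 1) ≤ ∑ m ∈ Icc 1 n, m * k m :=
            Finset.single_le_sum (f := fun m => m * k m) (fun m _ => Nat.zero_le _)
              (hsupp _ hz)
          have h2 := Nat.le_mul_of_pos_left (k (i.1 + 1)) (show 0 < i.1 + 1 by omega)
          omega
      · dsimp only
        rw [sum_fin_eq_sum_Icc n (fun m => m * k m)]
        exact hw
    · -- maps back
      intro f hf
      rw [thTuples, Finset.mem_filter] at hf
      obtain ⟨hf1, hw⟩ := hf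
      rw [Finset.mem_biUnion]
      have hki : ∀ i : Fin n,
          (if h : 1 ≤ i.1 + 1 ∧ i.1 + 1 ≤ n then f ⟨i.1 + 1 - 1, by omega⟩ else 0) = f i := by
        intro i
        rw [dif_pos ⟨by omega, by omega⟩]
        exact congrArg f (Fin.ext (by simp))
      have hweight : ∑ m ∈ Icc 1 n,
          m * (if h : 1 ≤ m ∧ m ≤ n then f ⟨m - 1, by omega⟩ else 0) = n := by
        rw [← sum_fin_eq_sum_Icc n
          (fun m => m * (if h : 1 ≤ m ∧ m ≤ n then f ⟨m - 1, by omega⟩ else 0))]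
        calc ∑ i : Fin n, (i.1 + 1) *
              (if h : 1 ≤ i.1 + 1 ∧ i.1 + 1 ≤ n then f ⟨i.1 + 1 - 1, by omega⟩ else 0)
            = ∑ i : Fin n, (i.1 + 1) * f i :=
              Finset.sum_congr rfl fun i _ => by rw [hki]
          _ = n := hw
      refine ⟨∑ m ∈ Icc 1 n, (if h : 1 ≤ m ∧ m ≤ n then f ⟨m - 1, by omega⟩ else 0), ?_, ?_⟩
      · rw [Finset.mem_range]
        have hle : ∑ m ∈ Icc 1 n, (if h : 1 ≤ m ∧ m ≤ n then f ⟨m - 1, by omega⟩ else 0)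
            ≤ ∑ m ∈ Icc 1 n, m * (if h : 1 ≤ m ∧ m ≤ n then f ⟨m - 1, by omega⟩ else 0) :=
          Finset.sum_le_sum fun m hm =>
            Nat.le_mul_of_pos_left _ (by have := Finset.mem_Icc.mp hm; omega)
        omega
      · rw [Finset.mem_filter, Finset.mem_piAntidiag]
        refine ⟨⟨rfl, ?_⟩, hweight⟩
        intro m hm
        by_contra hmem
        apply hm
        rw [dif_neg]
        intro hc
        exact hmem (Finset.mem_Icc.mpr ⟨hc.1, hc.2⟩)
    · -- left inverse
      intro k hk
      rw [Finset.mem_biUnion] at hk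
      obtain ⟨l, _, hk⟩ := hk
      rw [Finset.mem_filter, Finset.mem_piAntidiag] at hk
      funext m
      dsimp only
      by_cases h : 1 ≤ m ∧ m ≤ n
      · rw [dif_pos h]
        congr 1
        omega
      · rw [dif_neg h]
        by_contra hc
        have := hk.1.2 m (Ne.symm hc)
        rw [Finset.mem_Icc] at this
        exact h this
    · -- right inverse
      intro f hf
      funext i
      dsimp only
      rw [dif_pos ⟨by omega, by omega⟩]
      exact congrArg f (Fin.ext (by simp))
    · -- values agree
      intro k hk
      have hm : (Nat.multinomial (Icc 1 n) k : ℚ)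
          = Nat.multinomial Finset.univ (fun i : Fin n => k (i.1 + 1)) := by
        rw [Nat.multinomial, Nat.multinomial,
          ← sum_fin_eq_sum_Icc n (fun m => k m),
          ← prod_fin_eq_prod_Icc n (fun m => (k m).factorial)]
      have hp : ∏ m ∈ Icc 1 n, (-(1 : ℚ) / (m + 1).factorial) ^ k m
          = ∏ i : Fin n, (-(1 : ℚ) / ((i.1 + 2).factorial : ℚ)) ^ k (i.1 + 1) := by
        rw [← prod_fin_eq_prod_Icc n (fun m => (-(1 : ℚ) / (m + 1).factorial) ^ k m)]
      rw [hm, hp]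
  · -- pairwise disjoint
    intro l₁ _ l₂ _ hne
    refine Finset.disjoint_left.mpr fun k hk1 hk2 => hne ?_
    rw [Finset.mem_filter, Finset.mem_piAntidiag] at hk1 hk2
    rw [← hk1.1.1, ← hk2.1.1]


lemma coeff_one_sub_Gs_eq (n m : ℕ) (hm : m ≤ n) :
    PowerSeries.coeff (R := ℚ) m (1 - Gs) = PowerSeries.coeff (R := ℚ) m (Qs n) := by
  rw [coeff_Qs n m hm, map_sub, PowerSeries.coeff_one]
  rcases Nat.eq_zero_or_pos m with rfl | hm0
  · simp [Gs]
  · simp only [if_neg hm0.ne', Gs, coeff_mk]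
    ring

theorem bernoulli_eq_sum_multinomial (n : ℕ) (hn : 1 ≤ n) :
    bernoulli n = (n.factorial : ℚ) *
      ∑ f ∈ thTuples n, (Nat.multinomial Finset.univ f : ℚ) *
        ∏ i, (-(1 : ℚ) / ((i.1 + 2).factorial : ℚ)) ^ f i := by
  have key : bernoulli n / n.factorial
      = ∑ f ∈ thTuples n, (Nat.multinomial Finset.univ f : ℚ) *
        ∏ i, (-(1 : ℚ) / ((i.1 + 2).factorial : ℚ)) ^ f i := by
    rw [← coeff_bps n, coeff_bps_eq_geom n, map_sum, ← combinat n]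
    refine Finset.sum_congr rfl fun l _ => ?_
    rw [coeff_pow_congr (fun m hm => coeff_one_sub_Gs_eq n m hm) l n le_rfl,
      coeff_Qs_pow n l]
  have hfac : (n.factorial : ℚ) ≠ 0 := Nat.cast_ne_zero.mpr n.factorial_ne_zero
  rw [div_eq_iff hfac] at key
  rw [key, mul_comm]
end

section
/- For every n ≥ 1, bernoulli n = (-1)^n · n! · det H_n, where H_n is the n×n matrix over ℚ whose (i,j) entry (1-indexed) is 1/(j-i+2)! if i ≤ j, is 1 if i = j+1, and is 0 if i > j+1. -/
open Finset

private noncomputable def Hmat (n : ℕ) : Matrix (Fin n) (Fin n) ℚ :=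
  Matrix.of fun i j : Fin n =>
    if (i : ℕ) ≤ (j : ℕ) then 1 / ((((j : ℕ) - (i : ℕ) + 2).factorial : ℚ))
    else if (i : ℕ) = (j : ℕ) + 1 then 1 else 0

private lemma Hmat_succ_succ (n : ℕ) (i j : Fin n) :
    Hmat (n + 1) i.succ j.succ = Hmat n i j := by
  simp [Hmat, Nat.succ_sub_succ, Fin.val_succ, Nat.succ_le_succ_iff]

private lemma det_sub (n : ℕ) (j : Fin (n + 1)) :
    ((Hmat (n + 1)).submatrix Fin.succ j.succAbove).det
      = (Hmat (n - (j : ℕ))).det := by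
  induction n with
  | zero =>
    have : ((Hmat 1).submatrix Fin.succ j.succAbove) = Hmat 0 := by
      ext i c; exact absurd i.isLt (by omega)
    rw [this, Nat.zero_sub]
  | succ m ih =>
    cases j using Fin.cases with
    | zero =>
      rw [Fin.succAbove_zero]
      have : ((Hmat (m + 2)).submatrix Fin.succ Fin.succ) = Hmat (m + 1) := by
        ext i c; exact Hmat_succ_succ _ i c
      rw [this]; rfl
    | succ j' =>
      rw [Matrix.det_succ_column_zero]
      rw [Fintype.sum_eq_single (0 : Fin (m + 1))]
      · have h00 : ((Hmat (m + 2)).submatrix Fin.succ j'.succ.succAbove) 0 0 = 1 := by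
          rw [Matrix.submatrix_apply, Fin.succ_succAbove_zero]
          simp [Hmat]
        rw [h00]
        have hsub : (((Hmat (m + 2)).submatrix Fin.succ j'.succ.succAbove).submatrix
            (Fin.succAbove 0) Fin.succ) = (Hmat (m + 1)).submatrix Fin.succ j'.succAbove := by
          rw [Fin.succAbove_zero]
          ext i c
          simp only [Matrix.submatrix_apply, Fin.succ_succAbove_succ]
          exact Hmat_succ_succ _ _ _
        rw [hsub, ih j']
        have : (m + 1) - ((j'.succ : Fin (m + 2)) : ℕ) = m - (j' : ℕ) := by
          simp [Fin.val_succ]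
        rw [this]
        simp
      · intro i hi
        have hcol : ((Hmat (m + 2)).submatrix Fin.succ j'.succ.succAbove) i 0 = 0 := by
          rw [Matrix.submatrix_apply, Fin.succ_succAbove_zero]
          have hi' : (i : ℕ) ≠ 0 := fun h => hi (Fin.ext h)
          simp [Hmat, Fin.val_succ, hi', Fin.succ_ne_zero]
        rw [hcol]; ring

private lemma det_Hmat_succ (n : ℕ) :
    (Hmat (n + 1)).det = ∑ j : Fin (n + 1),
      (-1 : ℚ) ^ (j : ℕ) * (1 / (((j : ℕ) + 2).factorial : ℚ)) * (Hmat (n - (j : ℕ))).det := by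
  rw [Matrix.det_succ_row_zero]
  refine Fintype.sum_congr _ _ fun j => ?_
  rw [det_sub]
  congr 1

private lemma key (n : ℕ) :
    ∑ k ∈ range (n + 1), bernoulli k / ((k.factorial : ℚ) * (((n - k) + 2).factorial : ℚ))
      = -bernoulli (n + 1) / ((n + 1).factorial : ℚ) := by
  have h := sum_bernoulli (n + 2)
  rw [if_neg (by omega)] at h
  rw [Finset.sum_range_succ] at h
  have hch : ((n + 2).choose (n + 1) : ℚ) = (n : ℚ) + 2 := by
    rw [Nat.choose_succ_self_right]; push_cast; ring
  rw [hch] at h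
  have h' : ∑ k ∈ range (n + 1), ((n + 2).choose k : ℚ) * bernoulli k
      = -((n : ℚ) + 2) * bernoulli (n + 1) := by linarith
  have hfac : ((n + 2).factorial : ℚ) ≠ 0 := Nat.cast_ne_zero.mpr (Nat.factorial_ne_zero _)
  have hterm : ∀ k ∈ range (n + 1),
      bernoulli k / ((k.factorial : ℚ) * (((n - k) + 2).factorial : ℚ))
        = ((n + 2).choose k : ℚ) * bernoulli k / ((n + 2).factorial : ℚ) := by
    intro k hk
    have hkn : k ≤ n := by simpa using Nat.lt_succ_iff.mp (mem_range.mp hk)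
    have hsub : n + 2 - k = (n - k) + 2 := by omega
    rw [Nat.cast_choose ℚ (by omega : k ≤ n + 2), hsub]
    have h1 : ((k.factorial : ℚ)) ≠ 0 := Nat.cast_ne_zero.mpr (Nat.factorial_ne_zero _)
    have h2 : (((n - k + 2).factorial : ℚ)) ≠ 0 := Nat.cast_ne_zero.mpr (Nat.factorial_ne_zero _)
    field_simp
  rw [Finset.sum_congr rfl hterm, ← Finset.sum_div, h']
  have hfe : ((n + 2).factorial : ℚ) = ((n : ℚ) + 2) * ((n + 1).factorial : ℚ) := by
    rw [show n + 2 = (n + 1) + 1 from rfl, Nat.factorial_succ]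
    push_cast; ring
  rw [hfe]
  have h1 : ((n + 1).factorial : ℚ) ≠ 0 := Nat.cast_ne_zero.mpr (Nat.factorial_ne_zero _)
  have h2 : ((n : ℚ) + 2) ≠ 0 := by positivity
  field_simp

private noncomputable def fAux (n j : ℕ) : ℚ :=
  (-1) ^ j * (1 / ((j + 2).factorial : ℚ)) *
    ((-1) ^ (n - j) * bernoulli (n - j) / (((n - j).factorial : ℚ)))

private lemma det_Hmat (n : ℕ) :
    (Hmat n).det = (-1 : ℚ) ^ n * bernoulli n / (n.factorial : ℚ) := by
  induction n using Nat.strong_induction_on with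
  | _ n ih =>
    match n with
    | 0 => simp [Hmat]
    | n + 1 =>
      have hterm : ∀ j : Fin (n + 1),
          (-1 : ℚ) ^ (j : ℕ) * (1 / (((j : ℕ) + 2).factorial : ℚ)) * (Hmat (n - (j : ℕ))).det
            = fAux n (j : ℕ) := by
        intro j
        rw [ih (n - (j : ℕ)) (by omega)]
        rfl
      have step1 : (Hmat (n + 1)).det = ∑ j ∈ range (n + 1), fAux n j := by
        rw [det_Hmat_succ, ← Fin.sum_univ_eq_sum_range (fAux n) (n + 1)]
        exact Fintype.sum_congr _ _ hterm
      rw [step1, ← Finset.sum_range_reflect (fAux n) (n + 1)]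
      have hterm2 : ∀ k ∈ range (n + 1), fAux n (n + 1 - 1 - k)
          = (-1 : ℚ) ^ n *
            (bernoulli k / ((k.factorial : ℚ) * (((n - k) + 2).factorial : ℚ))) := by
        intro k hk
        have hkn : k ≤ n := by have := mem_range.mp hk; omega
        have e0 : n + 1 - 1 - k = n - k := by omega
        have e1 : n - (n - k) = k := by omega
        rw [e0]
        unfold fAux
        rw [e1]
        have e3 : (-1 : ℚ) ^ (n - k) * (-1 : ℚ) ^ k = (-1 : ℚ) ^ n := by
          rw [← pow_add]; congr 1; omega
        rw [show (-1 : ℚ) ^ (n - k) * (1 / (((n - k) + 2).factorial : ℚ)) *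
            ((-1 : ℚ) ^ k * bernoulli k / ((k.factorial : ℚ)))
          = ((-1 : ℚ) ^ (n - k) * (-1 : ℚ) ^ k) *
            (bernoulli k / ((k.factorial : ℚ) * (((n - k) + 2).factorial : ℚ))) from by ring, e3]
      rw [Finset.sum_congr rfl hterm2, ← Finset.mul_sum, key, pow_succ]
      ring

theorem bernoulli_eq_det (n : ℕ) (hn : 1 ≤ n) :
    bernoulli n = (-1 : ℚ) ^ n * (n.factorial : ℚ) *
      Matrix.det (Matrix.of fun i j : Fin n =>
        if (i : ℕ) ≤ (j : ℕ) then 1 / ((((j : ℕ) - (i : ℕ) + 2).factorial : ℚ))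
        else if (i : ℕ) = (j : ℕ) + 1 then 1 else 0) := by
  have h : Matrix.det (Matrix.of fun i j : Fin n =>
      if (i : ℕ) ≤ (j : ℕ) then 1 / ((((j : ℕ) - (i : ℕ) + 2).factorial : ℚ))
      else if (i : ℕ) = (j : ℕ) + 1 then 1 else 0)
      = (-1 : ℚ) ^ n * bernoulli n / (n.factorial : ℚ) := det_Hmat n
  rw [h]
  have h1 : ((n.factorial : ℚ)) ≠ 0 := Nat.cast_ne_zero.mpr (Nat.factorial_ne_zero _)
  have h2 : ((-1 : ℚ) ^ n) * ((-1 : ℚ) ^ n) = 1 := by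
    rw [← pow_add, ← two_mul, pow_mul]; norm_num
  field_simp
  rw [sq, h2, mul_one]
end

section
/- For every n ≥ 1, the following identity holds in ℚ: 1/(n+1)! = ∑ (-1)^{p} · (p!/(k_1!⋯k_n!)) · (bernoulli 1 / 1!)^{k_1} (bernoulli 2 / 2!)^{k_2} ⋯ (bernoulli n / n!)^{k_n}, where the sum ranges over all n-tuples (k_1,…,k_n) of nonnegative integers with k_1 + 2k_2 + ⋯ + n·k_n = n and p = k_1 + ⋯ + k_n. -/
open Finset

open PowerSeries in
/-- The Bernoulli power series is the inverse of `∑ Xⁿ/(n+1)!`. -/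
theorem bernoulliPS_mul_aux :
    bernoulliPowerSeries ℚ * PowerSeries.mk (fun m => (1:ℚ) / ((m+1).factorial : ℚ)) = 1 := by
  set A : ℚ⟦X⟧ := PowerSeries.mk fun m => (1 : ℚ) / ((m+1).factorial : ℚ) with hA
  have hXA : exp ℚ - 1 = X * A := by
    ext m
    cases m with
    | zero => simp [hA]
    | succ m =>
      rw [map_sub, coeff_exp, coeff_succ_X_mul, hA, coeff_mk, coeff_one]
      simp
  have h := bernoulliPowerSeries_mul_exp_sub_one ℚ
  rw [hXA] at h
  have h2 : X * (bernoulliPowerSeries ℚ * A) = X * 1 := by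
    rw [mul_one]; linear_combination h
  exact mul_left_cancel₀ X_ne_zero h2

open PowerSeries in
/-- Coefficient of the `p`-th power of the truncated Bernoulli series. -/
theorem coeff_pow_aux (n p : ℕ) :
    (coeff n) ((∑ i : Fin n, PowerSeries.C (bernoulli (i.1+1) / ((i.1+1).factorial : ℚ)) * X ^ (i.1+1)) ^ p)
      = ∑ k ∈ (Finset.piAntidiag univ p).filter (fun k : Fin n → ℕ => ∑ i, (i.1+1) * k i = n),
          (Nat.multinomial Finset.univ k : ℚ) *
            ∏ i, (bernoulli (i.1 + 1) / ((i.1 + 1).factorial : ℚ)) ^ k i := by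
  rw [Finset.sum_pow_eq_sum_piAntidiag, map_sum, Finset.sum_filter]
  refine Finset.sum_congr rfl fun k hk => ?_
  have hprod : ∏ i : Fin n, (PowerSeries.C (bernoulli (i.1+1) / ((i.1+1).factorial : ℚ)) * X ^ (i.1+1)) ^ k i
      = PowerSeries.C (∏ i, (bernoulli (i.1+1) / ((i.1+1).factorial : ℚ)) ^ k i) * X ^ (∑ i, (i.1+1) * k i) := by
    rw [map_prod, ← Finset.prod_pow_eq_pow_sum, ← Finset.prod_mul_distrib]
    refine Finset.prod_congr rfl fun i _ => ?_
    rw [mul_pow, map_pow, pow_mul]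
  rw [hprod, ← map_natCast (PowerSeries.C (R := ℚ)) (Nat.multinomial Finset.univ k), ← mul_assoc,
    ← map_mul, coeff_C_mul, coeff_X_pow]
  by_cases h : ∑ i, (i.1+1) * k i = n
  · rw [if_pos h, if_pos h.symm, mul_one]
  · rw [if_neg h, if_neg (fun hh => h hh.symm), mul_zero]

theorem thTuples_fiber_aux (n p : ℕ) :
    (thTuples n).filter (fun f => ∑ i, f i = p)
      = (Finset.piAntidiag univ p).filter (fun k : Fin n → ℕ => ∑ i, (i.1+1) * k i = n) := by
  ext f
  simp only [thTuples, Finset.mem_filter, Fintype.mem_piFinset, Finset.mem_range,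
    Finset.mem_piAntidiag, Finset.mem_univ, imp_true_iff, and_true]
  constructor
  · rintro ⟨⟨hb, hw⟩, hs⟩; exact ⟨hs, hw⟩
  · rintro ⟨hs, hw⟩
    refine ⟨⟨fun i => ?_, hw⟩, hs⟩
    have h1 := Finset.single_le_sum (f := fun j : Fin n => (j.1+1) * f j)
      (fun j _ => Nat.zero_le _) (Finset.mem_univ i)
    rw [hw] at h1
    have h2 : f i ≤ (i.1 + 1) * f i := Nat.le_mul_of_pos_left _ (Nat.succ_pos _)
    omega

theorem thTuples_sum_aux (n : ℕ) (g : (Fin n → ℕ) → ℚ) :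
    ∑ f ∈ thTuples n, g f
      = ∑ p ∈ Finset.range (n+1), ∑ f ∈ (thTuples n).filter (fun f => ∑ i, f i = p), g f := by
  rw [Finset.sum_fiberwise_of_maps_to]
  intro f hf
  simp only [thTuples, Finset.mem_filter] at hf
  rw [Finset.mem_range, Nat.lt_succ_iff]
  exact le_trans (Finset.sum_le_sum fun i _ => Nat.le_mul_of_pos_left _ (Nat.succ_pos _))
    (le_of_eq hf.2)

open PowerSeries in
theorem inv_factorial_eq_sum_bernoulli (n : ℕ) (hn : 1 ≤ n) :
    (1 : ℚ) / ((n + 1).factorial : ℚ) =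
      ∑ f ∈ thTuples n,
        (-1 : ℚ) ^ (∑ i, f i) * (Nat.multinomial Finset.univ f : ℚ) *
          ∏ i, (bernoulli (i.1 + 1) / ((i.1 + 1).factorial : ℚ)) ^ f i := by
  classical
  set A : ℚ⟦X⟧ := PowerSeries.mk fun m => (1 : ℚ) / ((m+1).factorial : ℚ) with hA
  set B : ℚ⟦X⟧ := bernoulliPowerSeries ℚ with hB
  have hBA : B * A = 1 := bernoulliPS_mul_aux
  set D : ℚ⟦X⟧ := B - 1 with hD
  set Cs : ℚ⟦X⟧ :=
    ∑ i : Fin n, PowerSeries.C (bernoulli (i.1+1) / ((i.1+1).factorial : ℚ)) * X ^ (i.1+1) with hCs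
  have hcoeffB : ∀ m, coeff m B = bernoulli m / (m.factorial : ℚ) := by
    intro m
    rw [hB, bernoulliPowerSeries, coeff_mk]
    simp
  -- coefficients of Cs
  have hcoeffCs : ∀ m, coeff m Cs =
      if 1 ≤ m ∧ m ≤ n then bernoulli m / (m.factorial : ℚ) else 0 := by
    intro m
    rw [hCs, map_sum]
    by_cases hm : 1 ≤ m ∧ m ≤ n
    · rw [if_pos hm]
      rw [Finset.sum_eq_single (⟨m - 1, by omega⟩ : Fin n)]
      · rw [coeff_C_mul, coeff_X_pow]
        simp only
        rw [if_pos (by omega), mul_one]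
        have hmm : m - 1 + 1 = m := by omega
        rw [hmm]
      · intro i _ hne
        rw [coeff_C_mul, coeff_X_pow, if_neg, mul_zero]
        intro h
        exact hne (by ext; simp only; omega)
      · intro h; exact absurd (Finset.mem_univ _) h
    · rw [if_neg hm]
      refine Finset.sum_eq_zero fun i _ => ?_
      rw [coeff_C_mul, coeff_X_pow, if_neg, mul_zero]
      intro h
      exact hm ⟨by omega, by omega⟩
  -- X^(n+1) divides D - Cs
  have hdvd : (X : ℚ⟦X⟧) ^ (n+1) ∣ D - Cs := by
    rw [PowerSeries.X_pow_dvd_iff]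
    intro m hm
    rw [map_sub, hcoeffCs, hD, map_sub, hcoeffB]
    by_cases hm1 : 1 ≤ m
    · rw [if_pos ⟨hm1, by omega⟩, PowerSeries.coeff_one, if_neg (by omega)]
      ring
    · have : m = 0 := by omega
      subst this
      rw [if_neg (by omega), PowerSeries.coeff_one, if_pos rfl]
      simp [bernoulli_zero]
  -- geometric sum
  set T : ℚ⟦X⟧ := ∑ p ∈ Finset.range (n+1), (-D) ^ p with hT
  have hgeom : T * B = 1 - (-D) ^ (n+1) := by
    have h := geom_sum_mul (-D) (n+1)
    have hB1 : B = D + 1 := by rw [hD]; ring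
    rw [hB1, hT]
    linear_combination -h
  have hXdvdD : (X : ℚ⟦X⟧) ∣ D := by
    rw [PowerSeries.X_dvd_iff, hD, map_sub]
    rw [map_one, ← PowerSeries.coeff_zero_eq_constantCoeff_apply, hcoeffB]
    simp [bernoulli_zero]
  have hAT : coeff n A = coeff n T := by
    have h1 : A - T = A * (-D) ^ (n+1) := by
      linear_combination T * hBA - A * hgeom
    have h2 : coeff n (A * (-D) ^ (n+1)) = 0 := by
      have hXD : (X : ℚ⟦X⟧) ^ (n+1) ∣ A * (-D) ^ (n+1) := by
        refine Dvd.dvd.mul_left ?_ A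
        have : (X : ℚ⟦X⟧) ^ (n+1) ∣ D ^ (n+1) := pow_dvd_pow_of_dvd hXdvdD _
        rw [neg_pow]
        exact Dvd.dvd.mul_left this _
      exact PowerSeries.X_pow_dvd_iff.mp hXD n (Nat.lt_succ_self n)
    have h3 := congrArg (coeff n) h1
    rw [map_sub, h2] at h3
    linarith
  -- coeff n (D^p) = coeff n (Cs^p)
  have hDp : ∀ p, coeff n (D ^ p) = coeff n (Cs ^ p) := by
    intro p
    have h1 : (X : ℚ⟦X⟧) ^ (n+1) ∣ D ^ p - Cs ^ p :=
      dvd_trans hdvd (sub_dvd_pow_sub_pow D Cs p)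
    have h2 := PowerSeries.X_pow_dvd_iff.mp h1 n (Nat.lt_succ_self n)
    rw [map_sub] at h2
    linarith
  -- assemble
  have hLHS : (1 : ℚ) / ((n + 1).factorial : ℚ) = coeff n A := by rw [hA, coeff_mk]
  rw [hLHS, hAT, hT, map_sum]
  rw [thTuples_sum_aux]
  refine Finset.sum_congr rfl fun p hp => ?_
  rw [thTuples_fiber_aux]
  have hcp : coeff n ((-D) ^ p) = (-1 : ℚ) ^ p * coeff n (Cs ^ p) := by
    rw [neg_pow, ← hDp p]
    have : ((-1 : ℚ⟦X⟧)) ^ p = PowerSeries.C ((-1 : ℚ) ^ p) := by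
      rw [map_pow, map_neg, map_one]
    rw [this, coeff_C_mul]
  rw [hcp, coeff_pow_aux, Finset.mul_sum]
  refine Finset.sum_congr rfl fun k hk => ?_
  have hkp : ∑ i, k i = p := by
    simp only [Finset.mem_filter, Finset.mem_piAntidiag] at hk
    exact hk.1.1
  rw [hkp, mul_assoc]
end

section
/- Let m ≥ 1 and let B^{(m)} : ℕ → ℚ be the generalized Bernoulli numbers of order m. Then for every n ≥ 1: B_n^{(m)}/n! = ∑ (-1)^{l} · C(m+l-1, l) · (l!/(k_1!⋯k_n!)) · (1/2!)^{k_1} (1/3!)^{k_2} ⋯ (1/(n+1)!)^{k_n}, where the sum ranges over all n-tuples (k_1,…,k_n) of nonnegative integers with k_1 + 2k_2 + ⋯ + n·k_n = n and l = k_1 + ⋯ + k_n. -/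
open Finset PowerSeries

noncomputable def gbS (m n : ℕ) (w : ℚ⟦X⟧) : ℚ⟦X⟧ :=
  ∑ l ∈ Finset.range (n + 1),
    PowerSeries.C ((-1 : ℚ) ^ l * ((m + l - 1).choose l : ℚ)) * w ^ l

lemma gbS_succ (m n : ℕ) (w : ℚ⟦X⟧) :
    gbS m (n + 1) w = gbS m n w
      + PowerSeries.C ((-1 : ℚ) ^ (n + 1) * ((m + (n + 1) - 1).choose (n + 1) : ℚ))
          * w ^ (n + 1) := by
  simp only [gbS, Finset.sum_range_succ]

lemma gbS_succ_mul (m n : ℕ) (w : ℚ⟦X⟧) :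
    (1 + w) * gbS (m + 1) n w
      = gbS m n w + PowerSeries.C ((-1 : ℚ) ^ n * ((m + n).choose n : ℚ)) * w ^ (n + 1) := by
  induction n with
  | zero => simp [gbS]
  | succ n ih =>
    rw [gbS_succ, gbS_succ, mul_add, ih]
    have h1 : m + 1 + (n + 1) - 1 = (m + n) + 1 := by omega
    have h2 : m + (n + 1) - 1 = m + n := by omega
    rw [h1, h2, show m + (n + 1) = m + n + 1 from rfl, Nat.choose_succ_succ' (m + n) n]
    simp only [Nat.cast_add, map_mul, map_add, map_pow, map_neg, map_one, map_natCast]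
    ring

lemma gbS_zero (n : ℕ) (w : ℚ⟦X⟧) : gbS 0 n w = 1 := by
  rw [gbS]
  rw [Finset.sum_eq_single 0]
  · simp
  · intro l _ hl
    rw [Nat.choose_eq_zero_of_lt (by omega)]
    simp
  · simp

lemma key_dvd (m n : ℕ) (w : ℚ⟦X⟧) (hw : (X : ℚ⟦X⟧) ∣ w) :
    (X : ℚ⟦X⟧) ^ (n + 1) ∣ (1 + w) ^ m * gbS m n w - 1 := by
  induction m with
  | zero => simp [gbS_zero]
  | succ m ih =>
    have h1 := gbS_succ_mul m n w
    have key : (1 + w) ^ (m + 1) * gbS (m + 1) n w - 1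
        = ((1 + w) ^ m * gbS m n w - 1)
          + (1 + w) ^ m * (PowerSeries.C ((-1 : ℚ) ^ n * ((m + n).choose n : ℚ)) * w ^ (n + 1)) := by
      rw [pow_succ]
      linear_combination (1 + w) ^ m * h1
    rw [key]
    exact dvd_add ih (Dvd.dvd.mul_left ((pow_dvd_pow_of_dvd hw (n + 1)).mul_left _) _)

lemma coeff_mul_X_pow_series (n : ℕ) (c : ℕ → ℚ) :
    (X : ℚ⟦X⟧) ^ (n + 1) ∣
      (X * PowerSeries.mk c - ∑ j ∈ Finset.range n, PowerSeries.C (c j) * X ^ (j + 1)) := by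
  rw [PowerSeries.X_pow_dvd_iff]
  intro d hd
  rw [map_sub, map_sum]
  simp only [PowerSeries.coeff_C_mul, PowerSeries.coeff_X_pow]
  cases d with
  | zero => simp
  | succ d =>
    rw [PowerSeries.coeff_succ_X_mul, PowerSeries.coeff_mk]
    rw [Finset.sum_eq_single d]
    · simp
    · intro j _ hj
      rw [if_neg (by omega), mul_zero]
    · intro hdn
      exact absurd (Finset.mem_range.2 (by omega)) hdn

lemma coeff_w_pow (n l : ℕ) (c : ℕ → ℚ) :
    PowerSeries.coeff n ((X * PowerSeries.mk c) ^ l)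
      = ∑ k ∈ (Finset.piAntidiag (Finset.range n) l).filter
          (fun k => ∑ j ∈ Finset.range n, (j + 1) * k j = n),
          (Nat.multinomial (Finset.range n) k : ℚ) * ∏ j ∈ Finset.range n, c j ^ k j := by
  have hdvd := (coeff_mul_X_pow_series n c).trans
    (sub_dvd_pow_sub_pow (X * PowerSeries.mk c) (∑ j ∈ Finset.range n, PowerSeries.C (c j) * X ^ (j + 1)) l)
  rw [PowerSeries.X_pow_dvd_iff] at hdvd
  have h3 := hdvd n (Nat.lt_succ_self n)
  rw [map_sub, sub_eq_zero] at h3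
  rw [h3, Finset.sum_pow_eq_sum_piAntidiag, map_sum, Finset.sum_filter]
  apply Finset.sum_congr rfl
  intro k hk
  have hprod : ∏ j ∈ Finset.range n, (PowerSeries.C (c j) * X ^ (j + 1)) ^ k j
      = PowerSeries.C (∏ j ∈ Finset.range n, c j ^ k j)
          * X ^ (∑ j ∈ Finset.range n, (j + 1) * k j) := by
    rw [map_prod, ← Finset.prod_pow_eq_pow_sum, ← Finset.prod_mul_distrib]
    apply Finset.prod_congr rfl
    intro j _
    rw [mul_pow, map_pow, pow_mul]
  rw [hprod, ← map_natCast (PowerSeries.C (R := ℚ)) (Nat.multinomial (Finset.range n) k), ← mul_assoc,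
    ← map_mul, PowerSeries.coeff_C_mul, PowerSeries.coeff_X_pow]
  by_cases h : ∑ j ∈ Finset.range n, (j + 1) * k j = n
  · rw [if_pos h, if_pos h.symm, mul_one]
  · rw [if_neg h, if_neg fun hh => h hh.symm, mul_zero]



theorem genBernoulli_eq_sum_multinomial (m : ℕ) (hm : 1 ≤ m) (B : ℕ → ℚ)
    (hB : (PowerSeries.mk fun n => 1 / ((n + 1).factorial : ℚ)) ^ m *
        (PowerSeries.mk fun n => B n / (n.factorial : ℚ)) = 1)
    (n : ℕ) (hn : 1 ≤ n) :
    B n / (n.factorial : ℚ) =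
      ∑ f ∈ thTuples n,
        (-1 : ℚ) ^ (∑ i, f i) * ((m + (∑ i, f i) - 1).choose (∑ i, f i) : ℚ) *
          (Nat.multinomial Finset.univ f : ℚ) *
            ∏ i, ((1 : ℚ) / ((i.1 + 2).factorial : ℚ)) ^ f i := by
  set c : ℕ → ℚ := fun j => 1 / ((j + 2).factorial : ℚ) with hc
  set w : ℚ⟦X⟧ := X * PowerSeries.mk c with hwdef
  -- rewrite the generating function
  have hg : (PowerSeries.mk fun k => 1 / ((k + 1).factorial : ℚ)) = 1 + w := by
    ext k
    cases k with
    | zero => simp [hwdef, hc]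
    | succ k =>
      rw [map_add, hwdef, PowerSeries.coeff_succ_X_mul, PowerSeries.coeff_mk,
        PowerSeries.coeff_one, if_neg (Nat.succ_ne_zero k), zero_add, PowerSeries.coeff_mk, hc]
  rw [hg] at hB
  have hXw : (X : ℚ⟦X⟧) ∣ w := dvd_mul_right _ _
  -- the partial sum has the right coefficient
  have hSd := key_dvd m n w hXw
  have hu : IsUnit ((1 + w : ℚ⟦X⟧) ^ m) := by
    apply IsUnit.pow
    rw [PowerSeries.isUnit_iff_constantCoeff]
    have : constantCoeff w = 0 := by
      obtain ⟨v, hv⟩ := hXw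
      rw [hv, map_mul, PowerSeries.constantCoeff_X, zero_mul]
    rw [map_add, this, map_one, add_zero]
    exact isUnit_one
  have hdvd2 : (X : ℚ⟦X⟧) ^ (n + 1) ∣
      gbS m n w - PowerSeries.mk fun j => B j / (j.factorial : ℚ) := by
    have hstep : (X : ℚ⟦X⟧) ^ (n + 1) ∣
        (1 + w) ^ m * (gbS m n w - PowerSeries.mk fun j => B j / (j.factorial : ℚ)) := by
      have : (1 + w) ^ m * (gbS m n w - PowerSeries.mk fun j => B j / (j.factorial : ℚ))
          = ((1 + w) ^ m * gbS m n w - 1)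
            - ((1 + w) ^ m * (PowerSeries.mk fun j => B j / (j.factorial : ℚ)) - 1) := by
        ring
      rw [this, hB, sub_self, sub_zero]
      exact hSd
    obtain ⟨v, hv⟩ := hstep
    refine ⟨(↑hu.unit⁻¹ : ℚ⟦X⟧) * v, ?_⟩
    have h2 : (↑hu.unit⁻¹ : ℚ⟦X⟧) * ((1 + w) ^ m *
        (gbS m n w - PowerSeries.mk fun j => B j / (j.factorial : ℚ)))
        = gbS m n w - PowerSeries.mk fun j => B j / (j.factorial : ℚ) := by
      rw [← mul_assoc, IsUnit.val_inv_mul, one_mul]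
    rw [← h2, hv]
    ring
  have hcoeffn : B n / (n.factorial : ℚ) = PowerSeries.coeff n (gbS m n w) := by
    rw [PowerSeries.X_pow_dvd_iff] at hdvd2
    have h := hdvd2 n (Nat.lt_succ_self n)
    rw [map_sub, sub_eq_zero, PowerSeries.coeff_mk] at h
    exact h.symm
  rw [hcoeffn]
  -- expand the coefficient of the partial sum
  rw [gbS, map_sum]
  simp only [PowerSeries.coeff_C_mul, hwdef, coeff_w_pow]
  -- regroup the right-hand side by the value of `∑ i, f i`
  have hmaps : ∀ f ∈ thTuples n, (∑ i, f i) ∈ Finset.range (n + 1) := by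
    intro f hf
    rw [thTuples, Finset.mem_filter] at hf
    rw [Finset.mem_range, Nat.lt_succ_iff]
    calc ∑ i, f i ≤ ∑ i, (i.1 + 1) * f i :=
          Finset.sum_le_sum fun i _ => Nat.le_mul_of_pos_left _ (Nat.succ_pos _)
      _ = n := hf.2
  rw [← Finset.sum_fiberwise_of_maps_to hmaps
    (fun f : Fin n → ℕ => (-1 : ℚ) ^ (∑ i, f i) * ((m + (∑ i, f i) - 1).choose (∑ i, f i) : ℚ) *
      (Nat.multinomial Finset.univ f : ℚ) * ∏ i, ((1 : ℚ) / ((i.1 + 2).factorial : ℚ)) ^ f i)]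
  apply Finset.sum_congr rfl
  intro l hl
  rw [Finset.mul_sum]
  refine Finset.sum_nbij' (i := fun k => fun i : Fin n => k i.1)
    (j := fun f => fun j : ℕ => if h : j < n then f ⟨j, h⟩ else 0) ?_ ?_ ?_ ?_ ?_
  · -- forward membership
    intro k hk
    rw [Finset.mem_filter] at hk ⊢
    obtain ⟨hk1, hk2⟩ := hk
    rw [Finset.mem_piAntidiag] at hk1
    have hsum : ∑ i : Fin n, k i.1 = ∑ j ∈ Finset.range n, k j :=
      Fin.sum_univ_eq_sum_range (fun j => k j) n
    have hwsum : ∑ i : Fin n, (i.1 + 1) * k i.1 = ∑ j ∈ Finset.range n, (j + 1) * k j :=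
      Fin.sum_univ_eq_sum_range (fun j => (j + 1) * k j) n
    refine ⟨?_, ?_⟩
    · rw [thTuples, Finset.mem_filter]
      refine ⟨?_, by rw [hwsum, hk2]⟩
      rw [Fintype.mem_piFinset]
      intro i
      rw [Finset.mem_range, Nat.lt_succ_iff]
      calc k i.1 ≤ (i.1 + 1) * k i.1 := Nat.le_mul_of_pos_left _ (Nat.succ_pos _)
        _ ≤ ∑ j ∈ Finset.range n, (j + 1) * k j := by
            rw [← hwsum]
            exact Finset.single_le_sum (f := fun i : Fin n => (i.1 + 1) * k i.1)
              (fun _ _ => Nat.zero_le _) (Finset.mem_univ i)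
        _ = n := hk2
    · rw [hsum, hk1.1]
  · -- backward membership
    intro f hf
    rw [Finset.mem_filter] at hf ⊢
    obtain ⟨hf1, hf2⟩ := hf
    rw [thTuples, Finset.mem_filter] at hf1
    have hsum : ∑ j ∈ Finset.range n, (if h : j < n then f ⟨j, h⟩ else 0)
        = ∑ i : Fin n, f i := by
      rw [← Fin.sum_univ_eq_sum_range (fun j => if h : j < n then f ⟨j, h⟩ else 0) n]
      exact Finset.sum_congr rfl fun i _ => by rw [dif_pos i.2]
    have hwsum : ∑ j ∈ Finset.range n, (j + 1) * (if h : j < n then f ⟨j, h⟩ else 0)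
        = ∑ i : Fin n, (i.1 + 1) * f i := by
      rw [← Fin.sum_univ_eq_sum_range (fun j => (j + 1) * if h : j < n then f ⟨j, h⟩ else 0) n]
      exact Finset.sum_congr rfl fun i _ => by rw [dif_pos i.2]
    refine ⟨?_, by rw [hwsum, hf1.2]⟩
    rw [Finset.mem_piAntidiag]
    refine ⟨by rw [hsum, hf2], ?_⟩
    intro j hj
    rw [Finset.mem_range]
    by_contra hjn
    exact hj (dif_neg hjn)
  · -- left inverse
    intro k hk
    rw [Finset.mem_filter] at hk
    have hk1 := hk.1
    rw [Finset.mem_piAntidiag] at hk1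
    funext j
    by_cases hj : j < n
    · simp only [dif_pos hj]
    · simp only [dif_neg hj]
      by_contra hne
      exact hj (Finset.mem_range.1 (hk1.2 j fun h0 => hne h0.symm))
  · -- right inverse
    intro f _
    funext i
    simp only [dif_pos i.2, Fin.eta]
  · -- values agree
    intro k hk
    rw [Finset.mem_filter] at hk
    have hk1 := hk.1
    rw [Finset.mem_piAntidiag] at hk1
    have hsum : ∑ i : Fin n, k i.1 = l := by
      rw [Fin.sum_univ_eq_sum_range (fun j => k j) n, hk1.1]
    have hprod : ∏ i : Fin n, c i.1 ^ k i.1 = ∏ j ∈ Finset.range n, c j ^ k j :=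
      Fin.prod_univ_eq_prod_range (fun j => c j ^ k j) n
    have hmult : Nat.multinomial Finset.univ (fun i : Fin n => k i.1)
        = Nat.multinomial (Finset.range n) k := by
      rw [Nat.multinomial, Nat.multinomial,
        Fin.sum_univ_eq_sum_range (fun j => k j) n,
        Fin.prod_univ_eq_prod_range (fun j => (k j).factorial) n]
    rw [hsum, hmult, hprod]
    ring
end

section
/- Let m ∈ ℕ and let B^{(m)} : ℕ → ℚ be the generalized Bernoulli numbers of order m. Then for every n ≥ 1: B_n^{(m)}/n! = ∑ C(m, l) · (l!/(k_1!⋯k_n!)) · (bernoulli 1 / 1!)^{k_1} (bernoulli 2 / 2!)^{k_2} ⋯ (bernoulli n / n!)^{k_n}, where the sum ranges over all n-tuples (k_1,…,k_n) of nonnegative integers with k_1 + 2k_2 + ⋯ + n·k_n = n and l = k_1 + ⋯ + k_n. -/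
open Finset PowerSeries

lemma aux_E_mul_X : (PowerSeries.mk fun n => 1 / ((n + 1).factorial : ℚ)) * X = exp ℚ - 1 := by
  ext k
  cases k with
  | zero => simp
  | succ k => simp [coeff_succ_mul_X, coeff_exp, coeff_one, Nat.succ_ne_zero, eq_comm]

lemma aux_E_mul_B : (PowerSeries.mk fun n => 1 / ((n + 1).factorial : ℚ)) *
    bernoulliPowerSeries ℚ = 1 := by
  apply mul_left_cancel₀ (X_ne_zero : (X : ℚ⟦X⟧) ≠ 0)
  calc X * ((PowerSeries.mk fun n => 1 / ((n + 1).factorial : ℚ)) * bernoulliPowerSeries ℚ)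
      = bernoulliPowerSeries ℚ * ((PowerSeries.mk fun n => 1 / ((n + 1).factorial : ℚ)) * X) := by
        ring
    _ = X * 1 := by rw [aux_E_mul_X, bernoulliPowerSeries_mul_exp_sub_one, mul_one]

noncomputable def Ssum (n : ℕ) : ℚ⟦X⟧ :=
  ∑ i : Fin n, C (bernoulli (i.1 + 1) / ((i.1 + 1).factorial : ℚ)) * X ^ (i.1 + 1)

lemma aux_coeff_B_pow (m n : ℕ) :
    (coeff n) (bernoulliPowerSeries ℚ ^ m) = (coeff n) ((1 + Ssum n) ^ m) := by
  have hdvd : (X : ℚ⟦X⟧) ^ (n + 1) ∣ bernoulliPowerSeries ℚ - (1 + Ssum n) := by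
    rw [X_pow_dvd_iff]
    intro i hi
    rw [map_sub, map_add]
    have hS : (coeff i) (Ssum n) =
        if h : 1 ≤ i ∧ i ≤ n then bernoulli i / (i.factorial : ℚ) else 0 := by
      rw [Ssum, map_sum]
      split_ifs with h
      · rw [Finset.sum_eq_single (⟨i - 1, by omega⟩ : Fin n)]
        · simp only [coeff_C_mul, coeff_X_pow]
          rw [if_pos (by omega)]
          have : i - 1 + 1 = i := by omega
          rw [this, mul_one]
        · intro j _ hj
          simp only [coeff_C_mul, coeff_X_pow]
          rw [if_neg, mul_zero]
          intro hji
          apply hj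
          apply Fin.ext
          simp only [Fin.val_mk]
          omega
        · simp
      · apply Finset.sum_eq_zero
        intro j _
        simp only [coeff_C_mul, coeff_X_pow]
        rw [if_neg (by omega), mul_zero]
    rw [hS]
    rcases Nat.eq_zero_or_pos i with h0 | h1
    · subst h0
      simp [bernoulliPowerSeries, coeff_mk]
    · rw [dif_pos ⟨h1, by omega⟩]
      simp [bernoulliPowerSeries, coeff_mk, coeff_one]
      omega
  have hdvd2 : (X : ℚ⟦X⟧) ^ (n + 1) ∣ bernoulliPowerSeries ℚ ^ m - (1 + Ssum n) ^ m :=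
    dvd_trans hdvd (sub_dvd_pow_sub_pow _ _ m)
  have := (X_pow_dvd_iff.mp hdvd2) n (Nat.lt_succ_self n)
  rw [map_sub, sub_eq_zero] at this
  exact this

lemma aux_coeff_term (n w : ℕ) (a : ℚ) (M : ℕ) :
    (coeff n) ((M : ℚ⟦X⟧) * (C a * X ^ w)) = if w = n then (M : ℚ) * a else 0 := by
  rw [← map_natCast (C (R := ℚ)) M, ← mul_assoc, ← map_mul, coeff_C_mul, coeff_X_pow]
  rcases eq_or_ne w n with h | h
  · simp [h]
  · simp [h, Ne.symm h]

lemma aux_set_eq (n l : ℕ) :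
    ((piAntidiag (univ : Finset (Fin n)) l).filter fun k => ∑ i, (i.1 + 1) * k i = n) =
      (thTuples n).filter fun k => ∑ i, k i = l := by
  ext k
  constructor
  · intro hk
    rw [mem_filter, mem_piAntidiag] at hk
    obtain ⟨⟨hsum, -⟩, hw⟩ := hk
    rw [thTuples, mem_filter, mem_filter, Fintype.mem_piFinset]
    refine ⟨⟨fun i => mem_range.mpr ?_, hw⟩, hsum⟩
    have h1 : (i.1 + 1) * k i ≤ ∑ j, (j.1 + 1) * k j :=
      Finset.single_le_sum (f := fun j => (j.1 + 1) * k j)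
        (fun _ _ => Nat.zero_le _) (mem_univ i)
    rw [hw] at h1
    have h2 : k i ≤ (i.1 + 1) * k i := Nat.le_mul_of_pos_left _ (by omega)
    omega
  · intro hk
    rw [thTuples, mem_filter, mem_filter, Fintype.mem_piFinset] at hk
    obtain ⟨⟨-, hw⟩, hsum⟩ := hk
    rw [mem_filter, mem_piAntidiag]
    exact ⟨⟨hsum, fun _ _ => mem_univ _⟩, hw⟩

lemma aux_main (m n : ℕ) :
    (coeff n) ((1 + Ssum n) ^ m) =
      ∑ f ∈ thTuples n,
        (m.choose (∑ i, f i) : ℚ) * (Nat.multinomial Finset.univ f : ℚ) *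
          ∏ i, (bernoulli (i.1 + 1) / ((i.1 + 1).factorial : ℚ)) ^ f i := by
  set c : Fin n → ℚ := fun i => bernoulli (i.1 + 1) / ((i.1 + 1).factorial : ℚ) with hc
  set F : (Fin n → ℕ) → ℚ := fun k =>
    (m.choose (∑ i, k i) : ℚ) * (Nat.multinomial Finset.univ k : ℚ) * ∏ i, c i ^ k i with hF
  have h1 : (1 + Ssum n) ^ m = ∑ l ∈ range (m + 1),
      (∑ k ∈ piAntidiag (univ : Finset (Fin n)) l, (Nat.multinomial univ k : ℚ⟦X⟧) *
        (C (∏ i, c i ^ k i) * X ^ (∑ i, (i.1 + 1) * k i))) * (m.choose l : ℚ⟦X⟧) := by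
    rw [add_comm, add_pow]
    refine Finset.sum_congr rfl fun l _ => ?_
    rw [one_pow, mul_one]
    congr 1
    rw [Ssum, Finset.sum_pow_eq_sum_piAntidiag]
    refine Finset.sum_congr rfl fun k _ => ?_
    congr 1
    simp_rw [mul_pow, ← map_pow, ← pow_mul]
    rw [Finset.prod_mul_distrib, ← map_prod, Finset.prod_pow_eq_pow_sum]
  rw [h1, map_sum]
  have h2 : ∀ l ∈ range (m + 1),
      (coeff n) ((∑ k ∈ piAntidiag (univ : Finset (Fin n)) l, (Nat.multinomial univ k : ℚ⟦X⟧) *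
        (C (∏ i, c i ^ k i) * X ^ (∑ i, (i.1 + 1) * k i))) * (m.choose l : ℚ⟦X⟧)) =
      ∑ k ∈ (thTuples n).filter fun k => ∑ i, k i = l, F k := by
    intro l _
    rw [← map_natCast (C (R := ℚ)) (m.choose l), mul_comm, coeff_C_mul, map_sum]
    simp_rw [aux_coeff_term]
    rw [mul_sum]
    simp_rw [mul_ite, mul_zero]
    rw [← Finset.sum_filter, aux_set_eq]
    refine Finset.sum_congr rfl fun k hk => ?_
    rw [mem_filter] at hk
    rw [hF]
    simp only [hk.2]
    ring
  rw [Finset.sum_congr rfl h2]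
  rw [← Finset.sum_filter_add_sum_filter_not (thTuples n) (fun k => ∑ i, k i ≤ m) F]
  have h3 : ∑ k ∈ (thTuples n).filter (fun k => ¬ ∑ i, k i ≤ m), F k = 0 := by
    refine Finset.sum_eq_zero fun k hk => ?_
    rw [mem_filter] at hk
    rw [hF]
    have hz : m.choose (∑ i, k i) = 0 := Nat.choose_eq_zero_of_lt (by omega)
    simp only [hz, Nat.cast_zero, zero_mul]
  rw [h3, add_zero]
  have hmaps : ∀ k ∈ (thTuples n).filter fun k => ∑ i, k i ≤ m,
      (∑ i, k i) ∈ range (m + 1) := by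
    intro k hk
    rw [mem_filter] at hk
    exact mem_range.mpr (by omega)
  rw [← Finset.sum_fiberwise_of_maps_to hmaps F]
  refine Finset.sum_congr rfl fun l hl => ?_
  congr 1
  rw [Finset.filter_filter]
  refine Finset.filter_congr fun k _ => ?_
  rw [mem_range] at hl
  omega

theorem genBernoulli_eq_sum_bernoulli_multinomial (m : ℕ) (B : ℕ → ℚ)
    (hB : (PowerSeries.mk fun n => 1 / ((n + 1).factorial : ℚ)) ^ m *
        (PowerSeries.mk fun n => B n / (n.factorial : ℚ)) = 1)
    (n : ℕ) (hn : 1 ≤ n) :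
    B n / (n.factorial : ℚ) =
      ∑ f ∈ thTuples n,
        (m.choose (∑ i, f i) : ℚ) * (Nat.multinomial Finset.univ f : ℚ) *
          ∏ i, (bernoulli (i.1 + 1) / ((i.1 + 1).factorial : ℚ)) ^ f i := by
  have h1 : (PowerSeries.mk fun n => 1 / ((n + 1).factorial : ℚ)) ^ m *
      bernoulliPowerSeries ℚ ^ m = 1 := by
    rw [← mul_pow, aux_E_mul_B, one_pow]
  have hBser : (PowerSeries.mk fun n => B n / (n.factorial : ℚ)) =
      bernoulliPowerSeries ℚ ^ m := by
    calc (PowerSeries.mk fun n => B n / (n.factorial : ℚ))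
        = ((PowerSeries.mk fun n => 1 / ((n + 1).factorial : ℚ)) ^ m *
            bernoulliPowerSeries ℚ ^ m) * (PowerSeries.mk fun n => B n / (n.factorial : ℚ)) := by
          rw [h1, one_mul]
      _ = bernoulliPowerSeries ℚ ^ m * ((PowerSeries.mk fun n => 1 / ((n + 1).factorial : ℚ)) ^ m *
            (PowerSeries.mk fun n => B n / (n.factorial : ℚ))) := by ring
      _ = bernoulliPowerSeries ℚ ^ m := by rw [hB, mul_one]
  have h2 : B n / (n.factorial : ℚ) =
      (coeff n) (PowerSeries.mk fun n => B n / (n.factorial : ℚ)) := by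
    rw [coeff_mk]
  rw [h2, hBser, aux_coeff_B_pow, aux_main]
end

section
/- Let S : ℕ → ℕ → ℚ be the Stirling numbers of the second kind. Then for all n ≥ k ≥ 1: S(n,k) = ∑ n!/(k_1! k_2! ⋯ k_n! · (1!)^{k_1} (2!)^{k_2} ⋯ (n!)^{k_n}), where the sum ranges over all n-tuples (k_1,…,k_n) of nonnegative integers with k_1 + k_2 + ⋯ + k_n = k and k_1 + 2k_2 + ⋯ + n·k_n = n. -/
open Finset PowerSeries

private theorem step1 (n k : ℕ) :
    coeff (R := ℚ) n ((PowerSeries.mk fun m => if m = 0 then 0 else (1:ℚ)/m.factorial) ^ k)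
      = coeff (R := ℚ) n ((∑ i ∈ range n, PowerSeries.C (R := ℚ) ((1:ℚ)/(i+1).factorial) * X ^ (i+1)) ^ k) := by
  rw [coeff_pow, coeff_pow]
  refine Finset.sum_congr rfl fun l hl => Finset.prod_congr rfl fun j hj => ?_
  rw [mem_finsuppAntidiag] at hl
  have hle : l j ≤ n := by
    calc l j ≤ ∑ i ∈ range k, l i := Finset.single_le_sum (fun _ _ => Nat.zero_le _) hj
      _ = n := hl.1
  rw [coeff_mk]
  simp only [map_sum, coeff_C_mul_X_pow]
  rcases eq_or_ne (l j) 0 with h | h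
  · simp [h, Nat.ne_of_lt' (Nat.succ_pos _)]
  · rw [if_neg h, Finset.sum_eq_single (l j - 1)]
    · have h1 : l j - 1 + 1 = l j := by omega
      rw [h1, if_pos rfl]
    · intro b _ hb; rw [if_neg (by omega)]
    · intro hb; exact absurd (mem_range.mpr (by omega)) hb

private theorem step2 (n k : ℕ) :
    coeff (R := ℚ) n ((∑ i ∈ range n, PowerSeries.C (R := ℚ) ((1:ℚ)/(i+1).factorial) * X ^ (i+1)) ^ k)
      = ∑ c ∈ Finset.piAntidiag (range n) k,
          if ∑ i ∈ range n, (i+1) * c i = n then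
            (Nat.multinomial (range n) c : ℚ) * ∏ i ∈ range n, ((1:ℚ)/((i+1).factorial : ℚ))^(c i)
          else 0 := by
  rw [Finset.sum_pow_eq_sum_piAntidiag, map_sum]
  refine Finset.sum_congr rfl fun c hc => ?_
  have h2 : ∏ i ∈ range n, (PowerSeries.C (R := ℚ) ((1:ℚ)/(i+1).factorial) * X ^ (i+1)) ^ c i
      = PowerSeries.C (R := ℚ) (∏ i ∈ range n, ((1:ℚ)/((i+1).factorial : ℚ))^(c i))
          * X ^ (∑ i ∈ range n, (i+1) * c i) := by
    rw [map_prod, ← Finset.prod_pow_eq_pow_sum, ← Finset.prod_mul_distrib]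
    refine Finset.prod_congr rfl fun i _ => ?_
    rw [mul_pow, map_pow, ← pow_mul]
  rw [h2, ← map_natCast (PowerSeries.C (R := ℚ)) (Nat.multinomial (range n) c), ← mul_assoc, ← map_mul,
    coeff_C_mul, coeff_X_pow, mul_ite, mul_one, mul_zero]
  by_cases h : ∑ i ∈ range n, (i+1) * c i = n
  · rw [if_pos h.symm, if_pos h]
  · rw [if_neg (fun hh => h hh.symm), if_neg h]

theorem stirling_eq_sum_multinomial (S : ℕ → ℕ → ℚ)
    (hS : ∀ k : ℕ,
      (k.factorial : ℚ) • PowerSeries.mk (fun n => S n k / (n.factorial : ℚ)) =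
        (PowerSeries.mk fun n => if n = 0 then 0 else (1 : ℚ) / (n.factorial : ℚ)) ^ k)
    (n k : ℕ) (hk : 1 ≤ k) (hkn : k ≤ n) :
    S n k =
      ∑ f ∈ (Fintype.piFinset fun _ : Fin n => Finset.range (n + 1)).filter
          (fun f => (∑ i, f i) = k ∧ ∑ i, (i.1 + 1) * f i = n),
        (n.factorial : ℚ) /
          ((∏ i, ((f i).factorial : ℚ)) * ∏ i, ((i.1 + 1).factorial : ℚ) ^ f i) := by
  have hkf : ((k.factorial : ℚ)) ≠ 0 := Nat.cast_ne_zero.mpr (Nat.factorial_ne_zero k)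
  have hnf : ((n.factorial : ℚ)) ≠ 0 := Nat.cast_ne_zero.mpr (Nat.factorial_ne_zero n)
  have h := congrArg (coeff (R := ℚ) n) (hS k)
  rw [map_smul, smul_eq_mul, coeff_mk] at h
  have key : S n k = ((n.factorial : ℚ) / k.factorial) *
      coeff (R := ℚ) n ((PowerSeries.mk fun m => if m = 0 then 0 else (1:ℚ)/m.factorial) ^ k) := by
    rw [← h]; field_simp
  rw [key, step1, step2, ← Finset.sum_filter, Finset.mul_sum]
  refine Finset.sum_nbij' (fun c => fun i : Fin n => c i.1)
    (fun f => fun m => if h : m < n then f ⟨m, h⟩ else 0) ?_ ?_ ?_ ?_ ?_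
  · intro c hc
    simp only [Finset.mem_filter, Finset.mem_piAntidiag] at hc
    obtain ⟨⟨hsum, hsupp⟩, hw⟩ := hc
    simp only [Finset.mem_filter, Fintype.mem_piFinset, Finset.mem_range]
    refine ⟨fun i => ?_, ?_, ?_⟩
    · have h1 : c i.1 ≤ ∑ j ∈ range n, c j :=
        Finset.single_le_sum (fun _ _ => Nat.zero_le _) (mem_range.mpr i.2)
      have h2 : ∑ j ∈ range n, c j = k := hsum
      omega
    · rw [← Finset.sum_range]; exact hsum
    · rw [← Finset.sum_range (fun m => (m + 1) * c m)]; exact hw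
  · intro f hf
    simp only [Finset.mem_filter, Fintype.mem_piFinset, Finset.mem_range] at hf
    obtain ⟨hb, hsum, hw⟩ := hf
    simp only [Finset.mem_filter, Finset.mem_piAntidiag]
    refine ⟨⟨?_, fun m hm => ?_⟩, ?_⟩
    · rw [Finset.sum_range]
      exact (Finset.sum_congr rfl fun i _ => dif_pos i.2).trans hsum
    · by_contra hmn
      rw [dif_neg (fun h => hmn (mem_range.mpr h))] at hm
      exact hm rfl
    · rw [Finset.sum_range]
      refine Eq.trans (Finset.sum_congr rfl fun i _ => ?_) hw
      rw [dif_pos i.2]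
  · intro c hc
    simp only [Finset.mem_filter, Finset.mem_piAntidiag] at hc
    obtain ⟨⟨hsum, hsupp⟩, hw⟩ := hc
    funext m
    by_cases h : m < n
    · simp [h]
    · simp only [dif_neg h]
      by_contra h0
      exact h (mem_range.mp (hsupp m (fun he => h0 he.symm)))
  · intro f hf
    funext i
    simp [i.2]
  · intro c hc
    simp only [Finset.mem_filter, Finset.mem_piAntidiag] at hc
    obtain ⟨⟨hsum, hsupp⟩, hw⟩ := hc
    have hc1 : (0:ℚ) < ∏ i ∈ range n, ((c i).factorial : ℚ) :=
      Finset.prod_pos fun i _ => by positivity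
    have hc2 : (0:ℚ) < ∏ i ∈ range n, (((i+1).factorial : ℚ)) ^ (c i) :=
      Finset.prod_pos fun i _ => by positivity
    have hmult : (Nat.multinomial (range n) c : ℚ)
        = (k.factorial : ℚ) / ∏ i ∈ range n, ((c i).factorial : ℚ) := by
      have := Nat.multinomial_spec (range n) c
      rw [hsum] at this
      have hq : (∏ i ∈ range n, ((c i).factorial : ℚ)) * (Nat.multinomial (range n) c : ℚ)
          = (k.factorial : ℚ) := by exact_mod_cast congrArg (Nat.cast (R := ℚ)) this
      field_simp
      linarith [hq]
    have hprod : ∏ i ∈ range n, ((1:ℚ)/(((i+1).factorial : ℚ))) ^ (c i)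
        = 1 / ∏ i ∈ range n, (((i+1).factorial : ℚ)) ^ (c i) := by
      simp only [div_pow, one_pow]
      rw [Finset.prod_div_distrib, Finset.prod_const_one]
    rw [hmult, hprod, ← Finset.prod_range (fun m => ((c m).factorial : ℚ)),
      ← Finset.prod_range (fun m => (((m+1).factorial : ℚ)) ^ (c m))]
    field_simp
end

section
/- Let S : ℕ → ℕ → ℚ be the Stirling numbers of the second kind. Then for all n ≥ 0 and k ≥ 0: S(n+1, k+1) = (1/(k+1)) · ∑_{i=1}^{n+1-k} C(n+1, i) · S(n+1-i, k). -/
open Finset PowerSeries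

theorem stirling_recurrence (S : ℕ → ℕ → ℚ)
    (hS : ∀ k : ℕ,
      (k.factorial : ℚ) • PowerSeries.mk (fun n => S n k / (n.factorial : ℚ)) =
        (PowerSeries.mk fun n => if n = 0 then 0 else (1 : ℚ) / (n.factorial : ℚ)) ^ k)
    (n k : ℕ) :
    S (n + 1) (k + 1) =
      (1 / ((k : ℚ) + 1)) *
        ∑ i ∈ Finset.Icc 1 (n + 1 - k), ((n + 1).choose i : ℚ) * S (n + 1 - i) k := by
  set F : PowerSeries ℚ := PowerSeries.mk fun n => if n = 0 then 0 else (1 : ℚ) / (n.factorial : ℚ) with hF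
  have hvan : ∀ m j : ℕ, m < j → S m j = 0 := by
    intro m j hmj
    have hX : (PowerSeries.X : PowerSeries ℚ) ∣ F := by
      rw [PowerSeries.X_dvd_iff]
      simp [hF, PowerSeries.constantCoeff_mk]
    have hXk := pow_dvd_pow_of_dvd hX j
    rw [PowerSeries.X_pow_dvd_iff] at hXk
    have h0 : PowerSeries.coeff (R := ℚ) m (F ^ j) = 0 := hXk m hmj
    have h := congrArg (PowerSeries.coeff (R := ℚ) m) (hS j)
    rw [h0, map_smul] at h
    simp only [PowerSeries.coeff_mk, smul_eq_mul] at h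
    have hjf : (j.factorial : ℚ) ≠ 0 := Nat.cast_ne_zero.mpr j.factorial_ne_zero
    have hmf : (m.factorial : ℚ) ≠ 0 := Nat.cast_ne_zero.mpr m.factorial_ne_zero
    field_simp at h
    exact (mul_eq_zero.mp (h.trans (mul_zero _))).resolve_left hjf
  have h1 := congrArg (PowerSeries.coeff (R := ℚ) (n + 1)) (hS (k + 1))
  rw [pow_succ', ← hS k] at h1
  rw [map_smul, PowerSeries.coeff_mk, PowerSeries.coeff_mul] at h1
  rw [Finset.Nat.sum_antidiagonal_eq_sum_range_succ_mk] at h1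
  simp only [hF, PowerSeries.coeff_mk, map_smul, smul_eq_mul] at h1
  have hkf : (k.factorial : ℚ) ≠ 0 := Nat.cast_ne_zero.mpr k.factorial_ne_zero
  have hnf : ((n+1).factorial : ℚ) ≠ 0 := Nat.cast_ne_zero.mpr (n+1).factorial_ne_zero
  have hk1 : ((k : ℚ) + 1) ≠ 0 := by positivity
  have h2 : ((k : ℚ) + 1) * S (n + 1) (k + 1) =
      ∑ i ∈ Finset.range (n + 2),
        (if i = 0 then 0 else ((n + 1).choose i : ℚ) * S (n + 1 - i) k) := by
    have step1 : ((k : ℚ) + 1) * S (n + 1) (k + 1) =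
        (((n+1).factorial : ℚ) / (k.factorial : ℚ)) *
          (((k+1).factorial : ℚ) * (S (n + 1) (k + 1) / ((n+1).factorial : ℚ))) := by
      have hfs : (((k+1).factorial : ℕ) : ℚ) = ((k : ℚ) + 1) * (k.factorial : ℚ) := by
        rw [Nat.factorial_succ]; push_cast; ring
      rw [hfs]
      field_simp
    rw [step1, h1, Finset.mul_sum]
    refine Finset.sum_congr rfl ?_
    intro i hi
    rw [Finset.mem_range] at hi
    by_cases h0 : i = 0
    · simp [h0]
    · simp only [h0, if_neg, if_false]
      have hle : i ≤ n + 1 := by omega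
      rw [Nat.cast_choose ℚ hle]
      have hif : (i.factorial : ℚ) ≠ 0 := Nat.cast_ne_zero.mpr i.factorial_ne_zero
      have hnif : ((n+1-i).factorial : ℚ) ≠ 0 := Nat.cast_ne_zero.mpr (n+1-i).factorial_ne_zero
      field_simp
  have h3 : ∑ i ∈ Finset.range (n + 2),
        (if i = 0 then 0 else ((n + 1).choose i : ℚ) * S (n + 1 - i) k) =
      ∑ i ∈ Finset.Icc 1 (n + 1 - k), ((n + 1).choose i : ℚ) * S (n + 1 - i) k := by
    rw [← Finset.sum_subset (f := fun i => if i = 0 then 0 else ((n + 1).choose i : ℚ) * S (n + 1 - i) k)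
      (s₁ := Finset.Icc 1 (n + 1 - k))]
    · refine Finset.sum_congr rfl ?_
      intro i hi
      rw [Finset.mem_Icc] at hi
      have : i ≠ 0 := by omega
      simp [this]
    · intro i hi
      rw [Finset.mem_Icc] at hi
      rw [Finset.mem_range]
      omega
    · intro i hi hni
      rw [Finset.mem_range] at hi
      rw [Finset.mem_Icc] at hni
      by_cases h0 : i = 0
      · simp [h0]
      · simp only [h0, if_neg, if_false]
        have : n + 1 - i < k := by omega
        rw [hvan _ _ this, mul_zero]
  rw [h3] at h2
  rw [← h2]
  field_simp
end

section
/- Let k ∈ ℕ, let B^{(-k)} : ℕ → ℚ be the generalized Bernoulli numbers of order -k, and let S : ℕ → ℕ → ℚ be the Stirling numbers of the second kind. Then for all n ≥ 0: C(n+k, k) · B_n^{(-k)} = S(n+k, k). -/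
open Finset PowerSeries

theorem genBernoulli_neg_order_eq_stirling (k : ℕ) (B : ℕ → ℚ)
    (hB : (PowerSeries.mk fun n => 1 / ((n + 1).factorial : ℚ)) ^ k =
        PowerSeries.mk fun n => B n / (n.factorial : ℚ))
    (S : ℕ → ℕ → ℚ)
    (hS : ∀ j : ℕ,
      (j.factorial : ℚ) • PowerSeries.mk (fun n => S n j / (n.factorial : ℚ)) =
        (PowerSeries.mk fun n => if n = 0 then 0 else (1 : ℚ) / (n.factorial : ℚ)) ^ j)
    (n : ℕ) :
    ((n + k).choose k : ℚ) * B n = S (n + k) k := by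
  have hX : (PowerSeries.mk fun n => if n = 0 then 0 else (1 : ℚ) / (n.factorial : ℚ)) =
      X * PowerSeries.mk fun n => 1 / ((n + 1).factorial : ℚ) := by
    ext m
    cases m with
    | zero => simp
    | succ m =>
      rw [PowerSeries.coeff_succ_X_mul]
      simp
  have key := hS k
  rw [hX, mul_pow, hB] at key
  have hc := congrArg (PowerSeries.coeff (R := ℚ) (n + k)) key
  rw [coeff_X_pow_mul] at hc
  simp only [map_smul, coeff_mk, smul_eq_mul] at hc
  -- hc : k! * (S (n+k) k / (n+k)!) = B n / n!
  have hfac : ((n + k).choose k : ℚ) * k.factorial * n.factorial = (n + k).factorial := by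
    have := Nat.choose_mul_factorial_mul_factorial (Nat.le_add_left k n)
    rw [Nat.add_sub_cancel] at this
    exact_mod_cast this
  have h1 : ((n + k).factorial : ℚ) ≠ 0 := Nat.cast_ne_zero.2 (Nat.factorial_ne_zero _)
  have h2 : (n.factorial : ℚ) ≠ 0 := Nat.cast_ne_zero.2 (Nat.factorial_ne_zero _)
  have h3 : (k.factorial : ℚ) ≠ 0 := Nat.cast_ne_zero.2 (Nat.factorial_ne_zero _)
  field_simp at hc
  have hfin : ((n + k).choose k : ℚ) * B n * (↑k.factorial * ↑n.factorial) =
      S (n + k) k * (↑k.factorial * ↑n.factorial) := by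
    linear_combination B n * hfac - hc
  exact mul_right_cancel₀ (mul_ne_zero h3 h2) hfin
end

section
/- Let k ≥ 1 and, for each j with 0 ≤ j ≤ k, let B^{(j)} : ℕ → ℚ be the generalized Bernoulli numbers of order j. Then for every n ≥ 1: B_n^{(k)} = k · bernoulli n + ∑_{i=1}^{n-1} C(n,i) · bernoulli i · (∑_{l=1}^{k-1} B_{n-i}^{(k-l)}). -/
open Finset PowerSeries

lemma aux_E_mul_bern :
    (PowerSeries.mk fun n => 1 / ((n + 1).factorial : ℚ)) *
      (PowerSeries.mk fun n => (bernoulli n / n.factorial : ℚ)) = 1 := by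
  have hB : bernoulliPowerSeries ℚ = PowerSeries.mk fun n => (bernoulli n / n.factorial : ℚ) := by
    ext n
    simp [bernoulliPowerSeries, coeff_mk]
  have hexp : exp ℚ - 1 = X * PowerSeries.mk fun n => 1 / ((n + 1).factorial : ℚ) := by
    ext n
    cases n with
    | zero => simp [coeff_exp]
    | succ m => simp [coeff_exp, coeff_succ_X_mul, coeff_mk]
  have h := bernoulliPowerSeries_mul_exp_sub_one ℚ
  rw [hB, hexp] at h
  have h2 : X * ((PowerSeries.mk fun n => 1 / ((n + 1).factorial : ℚ)) *
      (PowerSeries.mk fun n => (bernoulli n / n.factorial : ℚ))) = X * 1 := by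
    rw [mul_one]
    linear_combination h
  exact mul_left_cancel₀ PowerSeries.X_ne_zero h2

theorem genBernoulli_recurrence (k : ℕ) (hk : 1 ≤ k) (B : ℕ → ℕ → ℚ)
    (hB : ∀ j : ℕ, j ≤ k →
      (PowerSeries.mk fun n => 1 / ((n + 1).factorial : ℚ)) ^ j *
        (PowerSeries.mk fun n => B j n / (n.factorial : ℚ)) = 1)
    (n : ℕ) (hn : 1 ≤ n) :
    B k n = (k : ℚ) * bernoulli n +
      ∑ i ∈ Finset.Icc 1 (n - 1), (n.choose i : ℚ) * bernoulli i *
        ∑ l ∈ Finset.Icc 1 (k - 1), B (k - l) (n - i) := by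
  set E : PowerSeries ℚ := PowerSeries.mk fun n => 1 / ((n + 1).factorial : ℚ) with hE
  set Bn : PowerSeries ℚ := PowerSeries.mk fun n => (bernoulli n / n.factorial : ℚ) with hBn
  have hEB : E * Bn = 1 := aux_E_mul_bern
  have hpow : ∀ j : ℕ, Bn ^ j * E ^ j = 1 := by
    intro j
    rw [← mul_pow, mul_comm, hEB, one_pow]
  have hG : ∀ j : ℕ, j ≤ k → (PowerSeries.mk fun n => B j n / (n.factorial : ℚ)) = Bn ^ j := by
    intro j hj
    calc (PowerSeries.mk fun n => B j n / (n.factorial : ℚ))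
        = Bn ^ j * (E ^ j * PowerSeries.mk fun n => B j n / (n.factorial : ℚ)) := by
          rw [← mul_assoc, hpow, one_mul]
      _ = Bn ^ j := by rw [hB j hj, mul_one]
  have hdiv : ∀ j : ℕ, j ≤ k → ∀ m : ℕ,
      (PowerSeries.coeff m) (Bn ^ j) = B j m / (m.factorial : ℚ) := by
    intro j hj m
    rw [← hG j hj, coeff_mk]
  have hval : ∀ j : ℕ, j ≤ k → ∀ m : ℕ,
      B j m = (m.factorial : ℚ) * (PowerSeries.coeff m) (Bn ^ j) := by
    intro j hj m
    rw [hdiv j hj m]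
    field_simp
  have hB0 : ∀ j : ℕ, j ≤ k → B j 0 = 1 := by
    intro j hj
    rw [hval j hj 0]
    simp [coeff_zero_eq_constantCoeff, map_pow, hBn, constantCoeff_mk]
  -- expansion of B (j+1) m
  have hfull : ∀ j : ℕ, j + 1 ≤ k → ∀ m : ℕ,
      B (j + 1) m = ∑ i ∈ range (m + 1), (m.choose i : ℚ) * bernoulli i * B j (m - i) := by
    intro j hj m
    rw [hval (j + 1) hj m, pow_succ', coeff_mul,
      Finset.Nat.sum_antidiagonal_eq_sum_range_succ_mk, Finset.mul_sum]
    refine Finset.sum_congr rfl fun i hi => ?_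
    have him : i ≤ m := by simpa [Nat.lt_succ_iff] using hi
    rw [hdiv j (by omega) (m - i), hBn, coeff_mk, Nat.cast_choose ℚ him]
    have h1 : (i.factorial : ℚ) ≠ 0 := Nat.cast_ne_zero.mpr i.factorial_ne_zero
    have h2 : ((m - i).factorial : ℚ) ≠ 0 := Nat.cast_ne_zero.mpr (m - i).factorial_ne_zero
    field_simp
  have hstep : ∀ j : ℕ, j + 1 ≤ k → ∀ m : ℕ, 1 ≤ m →
      B (j + 1) m = B j m + bernoulli m +
        ∑ i ∈ Finset.Icc 1 (m - 1), (m.choose i : ℚ) * bernoulli i * B j (m - i) := by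
    intro j hj m hm
    rw [hfull j hj m]
    rw [Finset.sum_range_succ, Finset.range_eq_Ico,
      Finset.sum_eq_sum_Ico_succ_bot (by omega : 0 < m)]
    have hIco : Finset.Ico 1 m = Finset.Icc 1 (m - 1) := by
      rw [← Finset.Ico_add_one_right_eq_Icc]
      congr 1
      omega
    rw [hIco]
    simp only [Nat.sub_zero, Nat.sub_self, Nat.choose_zero_right, bernoulli_zero,
      Nat.choose_self, Nat.cast_one, hB0 j (by omega : j ≤ k)]
    ring
  -- main induction
  have main : ∀ K : ℕ, 1 ≤ K → K ≤ k → ∀ m : ℕ, 1 ≤ m →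
      B K m = (K : ℚ) * bernoulli m +
        ∑ i ∈ Finset.Icc 1 (m - 1), (m.choose i : ℚ) * bernoulli i *
          ∑ l ∈ Finset.Icc 1 (K - 1), B (K - l) (m - i) := by
    intro K hK
    induction K, hK using Nat.le_induction with
    | base =>
      intro _ m hm
      have h1 : B 1 m = bernoulli m := by
        rw [hval 1 hk m, pow_one, hBn, coeff_mk]
        field_simp
      simp [h1]
    | succ K hK1 ih =>
      intro hKk m hm
      have hKk' : K ≤ k := by omega
      have key : ∀ t : ℕ, ∑ l ∈ Finset.Icc 1 (K + 1 - 1), B (K + 1 - l) t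
          = B K t + ∑ l ∈ Finset.Icc 1 (K - 1), B (K - l) t := by
        intro t
        have e1 : Finset.Icc 1 (K + 1 - 1) = Finset.Ico 1 (K + 1) := by
          rw [← Finset.Ico_add_one_right_eq_Icc]
          congr 1
        rw [e1, Finset.sum_eq_sum_Ico_succ_bot (by omega : 1 < K + 1)]
        have e2 : Finset.Ico 2 (K + 1) = (Finset.Icc 1 (K - 1)).image (· + 1) := by
          ext x
          simp only [Finset.mem_Ico, Finset.mem_image, Finset.mem_Icc]
          constructor
          · intro hx
            exact ⟨x - 1, by omega, by omega⟩
          · rintro ⟨y, hy, rfl⟩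
            omega
        have congr1 : ∑ l ∈ Finset.Ico 2 (K + 1), B (K + 1 - l) t
            = ∑ l ∈ Finset.Icc 1 (K - 1), B (K - l) t := by
          rw [e2, Finset.sum_image (by intro a _ b _ h; simpa using h)]
          refine Finset.sum_congr rfl fun x hx => ?_
          congr 1
          omega
        rw [congr1]
        norm_num
      rw [hstep K hKk m hm, ih hKk' m hm]
      have hsum : ∑ i ∈ Finset.Icc 1 (m - 1), (m.choose i : ℚ) * bernoulli i *
            ∑ l ∈ Finset.Icc 1 (K + 1 - 1), B (K + 1 - l) (m - i)
          = (∑ i ∈ Finset.Icc 1 (m - 1), (m.choose i : ℚ) * bernoulli i * B K (m - i)) +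
            ∑ i ∈ Finset.Icc 1 (m - 1), (m.choose i : ℚ) * bernoulli i *
              ∑ l ∈ Finset.Icc 1 (K - 1), B (K - l) (m - i) := by
        rw [← Finset.sum_add_distrib]
        refine Finset.sum_congr rfl fun i _ => ?_
        rw [key (m - i)]
        ring
      rw [hsum]
      push_cast
      ring
  exact main k hk le_rfl n hn
end

section
/- Let k ≥ 1 and let B^{(k)} : ℕ → ℚ be the generalized Bernoulli numbers of order k. Then for every n ≥ 1: ∑_{i=0}^{n} C(n,i) · bernoulli i · B_{n-i}^{(k)} = (1 - n/k) · B_n^{(k)} - n · B_{n-1}^{(k)}. (For k = 1 this reduces to Euler's identity ∑_{i=0}^{n} C(n,i) B_i B_{n-i} = (1-n) B_n - n B_{n-1}.) -/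
open Finset PowerSeries

theorem genBernoulli_euler_identity (k : ℕ) (hk : 1 ≤ k) (B : ℕ → ℚ)
    (hB : (PowerSeries.mk fun n => 1 / ((n + 1).factorial : ℚ)) ^ k *
        (PowerSeries.mk fun n => B n / (n.factorial : ℚ)) = 1)
    (n : ℕ) (hn : 1 ≤ n) :
    ∑ i ∈ Finset.range (n + 1), (n.choose i : ℚ) * bernoulli i * B (n - i) =
      (1 - (n : ℚ) / (k : ℚ)) * B n - (n : ℚ) * B (n - 1) := by
  obtain ⟨G, hGb⟩ : ∃ G, G = bernoulliPowerSeries ℚ := ⟨_, rfl⟩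
  set E : ℚ⟦X⟧ := PowerSeries.mk fun n => 1 / ((n + 1).factorial : ℚ) with hE
  set F : ℚ⟦X⟧ := PowerSeries.mk fun n => B n / (n.factorial : ℚ) with hF
  -- X * E = exp - 1
  have hXE : X * E = exp ℚ - 1 := by
    ext m
    cases m with
    | zero => simp [coeff_zero_X_mul, coeff_exp]
    | succ m => simp [coeff_succ_X_mul, hE, coeff_exp, Nat.succ_ne_zero]
  have h : G * (exp ℚ - 1) = X := by rw [hGb]; exact bernoulliPowerSeries_mul_exp_sub_one ℚ
  -- G * E = 1
  have hGE : G * E = 1 := by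
    have h' := h
    rw [← hXE] at h'
    have hX : (X : ℚ⟦X⟧) * (G * E) = X * 1 := by rw [mul_one]; linear_combination h'
    exact mul_left_cancel₀ X_ne_zero hX
  -- F = G ^ k
  have hFG : F = G ^ k := by
    have h1 : G ^ k * E ^ k = 1 := by rw [← mul_pow, hGE, one_pow]
    calc F = (G ^ k * E ^ k) * F := by rw [h1, one_mul]
    _ = G ^ k * (E ^ k * F) := by ring
    _ = G ^ k := by rw [hB, mul_one]
  -- derivative of exp
  have hDexp : d⁄dX ℚ (exp ℚ) = exp ℚ := by
    ext m
    rw [PowerSeries.coeff_derivative, coeff_exp, coeff_exp]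
    simp only [Algebra.algebraMap_self, RingHom.id_apply, Nat.factorial_succ]
    have h1 : (m.factorial : ℚ) ≠ 0 := Nat.cast_ne_zero.mpr m.factorial_ne_zero
    have h2 : ((m : ℚ) + 1) ≠ 0 := by positivity
    push_cast
    field_simp
  -- key identity : G * G = G - X * D G - X * G
  have hkey : G * G = G - X * (d⁄dX ℚ G) - X * G := by
    have h1 : d⁄dX ℚ (G * (exp ℚ - 1)) = d⁄dX ℚ X := by rw [h]
    rw [Derivation.leibniz, map_sub, hDexp, Derivation.map_one_eq_zero, sub_zero,
      PowerSeries.derivative_X, smul_eq_mul, smul_eq_mul] at h1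
    linear_combination G * h1 - (G + d⁄dX ℚ G) * h
  -- multiply by G ^ (k-1):
  obtain ⟨m, rfl⟩ : ∃ m, k = m + 1 := ⟨k - 1, (Nat.succ_pred_eq_of_pos hk).symm⟩
  have hpow : (((m+1 : ℕ) : ℚ⟦X⟧)) * G ^ (m + 2) =
      ((m+1 : ℕ) : ℚ⟦X⟧) * G ^ (m+1) - X * (d⁄dX ℚ (G ^ (m+1)))
        - ((m+1 : ℕ) : ℚ⟦X⟧) * (X * G ^ (m+1)) := by
    have hD : d⁄dX ℚ (G ^ (m+1)) = ((m+1 : ℕ) : ℚ⟦X⟧) * (G ^ m * d⁄dX ℚ G) := by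
      rw [Derivation.leibniz_pow]
      simp [nsmul_eq_mul, smul_eq_mul, mul_assoc]
    rw [hD]
    have h2 : G ^ (m + 2) = G ^ m * (G * G) := by ring
    rw [h2, hkey]
    ring
  -- take coefficient n
  obtain ⟨p, rfl⟩ : ∃ p, n = p + 1 := ⟨n - 1, (Nat.succ_pred_eq_of_pos hn).symm⟩
  have hco := congrArg (fun f => PowerSeries.coeff (p+1) f) hpow
  simp only [map_sub, map_mul] at hco
  have hcast : ((m+1 : ℕ) : ℚ⟦X⟧) = PowerSeries.C ((m+1 : ℕ) : ℚ) :=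
    (map_natCast (PowerSeries.C (R := ℚ)) (m+1)).symm
  rw [hcast] at hco
  simp only [coeff_C_mul, coeff_succ_X_mul] at hco
  -- coefficients of G^(m+1) are B j / j!
  have hcoeffF : ∀ j, PowerSeries.coeff j (G ^ (m+1)) = B j / (j.factorial : ℚ) := by
    intro j; rw [← hFG, hF, coeff_mk]
  rw [PowerSeries.coeff_derivative] at hco
  simp only [hcoeffF] at hco
  -- coefficient of G^(m+2) = G * G^(m+1)
  have hGco : ∀ j, PowerSeries.coeff j G = bernoulli j / (j.factorial : ℚ) := by
    intro j; rw [hGb, bernoulliPowerSeries, coeff_mk]; simp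
  have hmul : PowerSeries.coeff (p+1) (G ^ (m+2)) =
      (1 / (((p+1) : ℕ).factorial : ℚ)) * ∑ i ∈ Finset.range (p + 1 + 1),
        (((p+1).choose i : ℕ) : ℚ) * bernoulli i * B (p + 1 - i) := by
    have h2 : G ^ (m+2) = G * G ^ (m+1) := by ring
    rw [h2, PowerSeries.coeff_mul, Finset.Nat.sum_antidiagonal_eq_sum_range_succ_mk,
      Finset.mul_sum]
    refine Finset.sum_congr rfl fun i hi => ?_
    rw [hGco, hcoeffF]
    rw [Nat.cast_choose ℚ (Nat.lt_succ_iff.mp (Finset.mem_range.mp hi))]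
    have h1 : (i.factorial : ℚ) ≠ 0 := Nat.cast_ne_zero.mpr i.factorial_ne_zero
    have h2 : ((((p+1) : ℕ) - i).factorial : ℚ) ≠ 0 := Nat.cast_ne_zero.mpr (Nat.factorial_ne_zero _)
    have h3 : ((((p+1)) : ℕ).factorial : ℚ) ≠ 0 := Nat.cast_ne_zero.mpr (Nat.factorial_ne_zero _)
    field_simp
  rw [hmul] at hco
  -- now pure algebra
  have h4 : ((p.factorial : ℕ) : ℚ) ≠ 0 := Nat.cast_ne_zero.mpr (Nat.factorial_ne_zero _)
  have hm1 : ((m : ℚ) + 1) ≠ 0 := by positivity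
  have hn1 : ((p : ℚ) + 1) ≠ 0 := by positivity
  push_cast [Nat.factorial_succ] at hco ⊢
  field_simp at hco
  have hne : ((p : ℚ) + 1) * (p.factorial : ℚ) * (p.factorial : ℚ) ≠ 0 :=
    mul_ne_zero (mul_ne_zero hn1 h4) h4
  have key : ((m : ℚ) + 1) *
      (∑ i ∈ Finset.range (p + 1 + 1), (((p+1).choose i : ℕ) : ℚ) * bernoulli i * B (p + 1 - i)) =
      ((m : ℚ) + 1) * B (p + 1) - ((p : ℚ) + 1) * B (p + 1)
        - ((m : ℚ) + 1) * ((p : ℚ) + 1) * B p := by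
    refine mul_right_cancel₀ hne ?_
    linear_combination ((p : ℚ) + 1) * (p.factorial : ℚ) * (p.factorial : ℚ) * hco
  field_simp
  linear_combination key
end
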